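/- arXiv:1405.7257 — 7 statements merged into one kernel-verified Lean document; each statement's English description precedes it below -/
import Mathlib

section
/- The incidence Q-tensor Q* of a k-uniform hypergraph G on n vertices is irreducible if and only if G is connected. Here Q* is the order-k dimension-n tensor with entry Q*_{i_1...i_k} equal to the number of edges of G containing all of the vertices i_1,...,i_k. -/
/-- A Berge path in a hypergraph with edge set `E`: distinct vertices
`v 0, …, v q`, distinct edges `f 0, …, f (q-1)` of `E`, with
`v r, v (r+1) ∈ f r`. -/
def IsBergePath {n : ℕ} (E : Finset (Finset (Fin n))) {q : ℕ}
    (v : Fin (q + 1) → Fin n) (f : Fin q → Finset (Fin n)) : Prop :=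
  Function.Injective v ∧ Function.Injective f ∧ (∀ r, f r ∈ E) ∧
    ∀ r : Fin q, v r.castSucc ∈ f r ∧ v r.succ ∈ f r

/-- A hypergraph is connected if any two distinct vertices are joined by a Berge path. -/
def HConnected {n : ℕ} (E : Finset (Finset (Fin n))) : Prop :=
  ∀ a b : Fin n, a ≠ b →
    ∃ (q : ℕ) (v : Fin (q + 1) → Fin n) (f : Fin q → Finset (Fin n)),
      IsBergePath E v f ∧ v 0 = a ∧ v (Fin.last q) = b

/-- A Berge cycle: distinct vertices `v 0, …, v (q-1)` (`q ≥ 2`), distinct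
edges `f 0, …, f (q-1)` of `E`, with `v r, v (r+1 mod q) ∈ f r`. -/
def HasBergeCycle {n : ℕ} (E : Finset (Finset (Fin n))) : Prop :=
  ∃ (q : ℕ) (hq : 2 ≤ q) (v : Fin q → Fin n) (f : Fin q → Finset (Fin n)),
    Function.Injective v ∧ Function.Injective f ∧ (∀ r, f r ∈ E) ∧
      ∀ r : Fin q, v r ∈ f r ∧ v ⟨((r : ℕ) + 1) % q, Nat.mod_lt _ (by omega)⟩ ∈ f r

/-- The entry of the incidence Q-tensor at an index tuple `i`: the number of
edges containing all the vertices `i t`. -/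
def Qent {n : ℕ} (E : Finset (Finset (Fin n))) {l : ℕ} (i : Fin l → Fin n) : ℕ :=
  (E.filter (fun e => ∀ t, i t ∈ e)).card

/-- A tensor of order `k+1` (given by its entries on index tuples) is reducible
if there is a nonempty proper index set `I` with all entries vanishing whenever
the first index is in `I` and all the others are outside `I`. -/
def QReducible {n : ℕ} (k : ℕ) (E : Finset (Finset (Fin n))) : Prop :=
  ∃ I : Finset (Fin n), I.Nonempty ∧ I ≠ Finset.univ ∧
    ∀ i : Fin (k + 1) → Fin n, i 0 ∈ I → (∀ t, t ≠ 0 → i t ∉ I) → Qent E i = 0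

def Reach {n : ℕ} (E : Finset (Finset (Fin n))) (a z : Fin n) : Prop :=
  ∃ (q : ℕ) (v : Fin (q + 1) → Fin n) (f : Fin q → Finset (Fin n)),
    IsBergePath E v f ∧ v 0 = a ∧ v (Fin.last q) = z

lemma reach_self {n : ℕ} (E : Finset (Finset (Fin n))) (a : Fin n) : Reach E a a := by
  refine ⟨0, fun _ => a, Fin.elim0, ⟨fun x y _ => Subsingleton.elim (α := Fin 1) x y,
    fun x => x.elim0, fun r => r.elim0, fun r => r.elim0⟩, rfl, rfl⟩

lemma prefix_path {n q : ℕ} {E : Finset (Finset (Fin n))} {v : Fin (q+1) → Fin n}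
    {f : Fin q → Finset (Fin n)} (h : IsBergePath E v f) (m : ℕ) (hm : m ≤ q) :
    IsBergePath E (fun j : Fin (m+1) => v (Fin.castLE (by omega) j))
      (fun j : Fin m => f (Fin.castLE hm j)) := by
  obtain ⟨hv, hf, hE, hin⟩ := h
  refine ⟨fun x y hxy => Fin.castLE_injective _ (hv hxy),
    fun x y hxy => Fin.castLE_injective _ (hf hxy), fun r => hE _, fun r => ?_⟩
  have h1 : (Fin.castLE (by omega : m+1 ≤ q+1) r.castSucc) = (Fin.castLE hm r).castSucc := by
    ext; simp
  have h2 : (Fin.castLE (by omega : m+1 ≤ q+1) r.succ) = (Fin.castLE hm r).succ := by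
    ext; simp
  simpa [h1, h2] using hin (Fin.castLE hm r)

lemma snoc_path {n q : ℕ} {E : Finset (Finset (Fin n))} {v : Fin (q+1) → Fin n}
    {f : Fin q → Finset (Fin n)} {e : Finset (Fin n)} {y : Fin n}
    (h : IsBergePath E v f) (he : e ∈ E) (hze : v (Fin.last q) ∈ e) (hy : y ∈ e)
    (hyv : ∀ r, y ≠ v r) (hef : ∀ r, e ≠ f r) :
    IsBergePath E (Fin.snoc v y) (Fin.snoc f e) := by
  obtain ⟨hv, hf, hE, hin⟩ := h
  refine ⟨?_, ?_, ?_, ?_⟩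
  · intro x y' hxy
    induction x using Fin.lastCases with
    | last =>
      induction y' using Fin.lastCases with
      | last => rfl
      | cast j => simp [Fin.snoc_last, Fin.snoc_castSucc] at hxy; exact absurd hxy (hyv j)
    | cast i =>
      induction y' using Fin.lastCases with
      | last => simp [Fin.snoc_last, Fin.snoc_castSucc] at hxy
                exact absurd hxy.symm (hyv i)
      | cast j => simp only [Fin.snoc_castSucc] at hxy; exact congrArg _ (hv hxy)
  · intro x y' hxy
    induction x using Fin.lastCases with
    | last =>
      induction y' using Fin.lastCases with
      | last => rfl
      | cast j => simp [Fin.snoc_last, Fin.snoc_castSucc] at hxy; exact absurd hxy (hef j)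
    | cast i =>
      induction y' using Fin.lastCases with
      | last => simp [Fin.snoc_last, Fin.snoc_castSucc] at hxy
                exact absurd hxy.symm (hef i)
      | cast j => simp only [Fin.snoc_castSucc] at hxy; exact congrArg _ (hf hxy)
  · intro r
    induction r using Fin.lastCases with
    | last => simpa [Fin.snoc_last] using he
    | cast j => simpa [Fin.snoc_castSucc] using hE j
  · intro r
    induction r using Fin.lastCases with
    | last =>
      constructor
      · rw [Fin.snoc_last, Fin.snoc_castSucc]; exact hze
      · rw [Fin.snoc_last, Fin.succ_last, Fin.snoc_last]; exact hy
    | cast j =>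
      constructor
      · rw [Fin.snoc_castSucc, Fin.snoc_castSucc]
        exact (hin j).1
      · rw [Fin.snoc_castSucc, Fin.succ_castSucc, Fin.snoc_castSucc]
        exact (hin j).2

lemma reach_step {n : ℕ} {E : Finset (Finset (Fin n))} {a z y : Fin n} {e : Finset (Fin n)}
    (hz : Reach E a z) (he : e ∈ E) (hze : z ∈ e) (hye : y ∈ e) : Reach E a y := by
  obtain ⟨q, v, f, hp, h0, hl⟩ := hz
  by_cases hyv : ∃ r, y = v r
  · obtain ⟨r, rfl⟩ := hyv
    refine ⟨r.val, _, _, prefix_path hp r.val (Nat.lt_succ_iff.mp r.isLt), ?_, ?_⟩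
    · exact (congrArg v (Fin.ext (by simp))).trans h0
    · exact congrArg v (Fin.ext (by simp))
  · push_neg at hyv
    by_cases hef : ∃ r, e = f r
    · obtain ⟨r, he'⟩ := hef
      have hr : (r : ℕ) ≤ q := le_of_lt r.isLt
      have hp' := prefix_path hp r.val hr
      have hend : v (Fin.castLE (by omega) (Fin.last r.val)) ∈ e := by
        have hcast : (Fin.castLE (by omega : r.val+1 ≤ q+1) (Fin.last r.val)) = r.castSucc := by
          ext; simp
        rw [hcast, he']; exact (hp.2.2.2 r).1
      refine ⟨r.val + 1, _, _,
        snoc_path hp' he hend hye (fun j => hyv _) (fun j hc => ?_), ?_, ?_⟩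
      · have h1 : f r = f (Fin.castLE hr j) := he' ▸ hc
        have h2 : r = Fin.castLE hr j := hp.2.1 h1
        have h3 : (r : ℕ) = (j : ℕ) := congrArg Fin.val h2
        have := j.isLt; omega
      · have h00 : (0 : Fin (r.val+2)) = Fin.castSucc 0 := rfl
        rw [h00, Fin.snoc_castSucc]
        exact (congrArg v (Fin.ext (by simp))).trans h0
      · exact Fin.snoc_last _ _
    · push_neg at hef
      refine ⟨q + 1, _, _, snoc_path hp he (by rw [hl]; exact hze) hye hyv hef, ?_, ?_⟩
      · have h00 : (0 : Fin (q+2)) = Fin.castSucc 0 := rfl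
        rw [h00, Fin.snoc_castSucc]; exact h0
      · exact Fin.snoc_last _ _

/-- The incidence Q-tensor of a uniform hypergraph is irreducible iff the
hypergraph is connected. (Stated for `(k+1)`-uniform hypergraphs, `k ≥ 1`.) -/
theorem qstar_irreducible_iff_connected {n k : ℕ} (hk : 1 ≤ k)
    (E : Finset (Finset (Fin n))) (hunif : ∀ e ∈ E, e.card = k + 1) :
    ¬ QReducible k E ↔ HConnected E := by
  classical
  have dir1 : HConnected E → ¬ QReducible k E := by
    rintro hc ⟨I, hne, hproper, hvan⟩
    obtain ⟨a, ha⟩ := hne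
    obtain ⟨b, hb⟩ : ∃ b, b ∉ I := by
      by_contra h; push_neg at h; exact hproper (Finset.eq_univ_iff_forall.mpr h)
    have hab : a ≠ b := fun h => hb (h ▸ ha)
    obtain ⟨q, v, f, hp, h0, hl⟩ := hc a b hab
    have hex : ∃ m, ∃ _ : m ≤ q, v ⟨m, by omega⟩ ∉ I := by
      refine ⟨q, le_rfl, ?_⟩
      have : (⟨q, by omega⟩ : Fin (q+1)) = Fin.last q := rfl
      rw [this, hl]; exact hb
    obtain ⟨hmq, hvm⟩ := Nat.find_spec hex
    have hm0 : Nat.find hex ≠ 0 := by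
      intro h
      apply hvm
      have heq : v (⟨Nat.find hex, by omega⟩ : Fin (q+1)) = a := by
        rw [show (⟨Nat.find hex, by omega⟩ : Fin (q+1)) = 0 from Fin.ext (by simp [h]), h0]
      rw [heq]; exact ha
    have hprev : v ⟨Nat.find hex - 1, by omega⟩ ∈ I := by
      have h := Nat.find_min hex (show Nat.find hex - 1 < Nat.find hex by omega)
      push_neg at h
      exact h (by omega)
    have hrq : Nat.find hex - 1 < q := by omega
    set r : Fin q := ⟨Nat.find hex - 1, hrq⟩ with hrdef
    have hcs : v r.castSucc ∈ I := hprev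
    have hsc : v r.succ ∉ I := by
      have : r.succ = (⟨Nat.find hex, by omega⟩ : Fin (q+1)) := by
        ext; simp [hrdef]; omega
      rw [this]; exact hvm
    set i : Fin (k+1) → Fin n := fun t => if t = 0 then v r.castSucc else v r.succ with hidef
    have hQ : Qent E i = 0 := by
      refine hvan i ?_ ?_
      · simpa only [hidef, if_pos rfl] using hcs
      · intro t ht; simpa only [hidef, if_neg ht] using hsc
    have hmem : f r ∈ E.filter (fun e => ∀ t, i t ∈ e) := by
      refine Finset.mem_filter.mpr ⟨hp.2.2.1 r, fun t => ?_⟩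
      simp only [hidef]
      split
      · exact (hp.2.2.2 r).1
      · exact (hp.2.2.2 r).2
    exact Finset.card_ne_zero_of_mem hmem hQ
  have dir2 : ¬ HConnected E → QReducible k E := by
    intro hnc
    unfold HConnected at hnc
    push_neg at hnc
    obtain ⟨a, b, hab, hnp⟩ := hnc
    refine ⟨Finset.univ.filter (fun z => Reach E a z),
      ⟨a, Finset.mem_filter.mpr ⟨Finset.mem_univ _, reach_self E a⟩⟩, ?_, ?_⟩
    · intro h
      have hb : b ∈ Finset.univ.filter (fun z => Reach E a z) := by
        rw [h]; exact Finset.mem_univ b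
      obtain ⟨q, v, f, hp, h0, hl⟩ := (Finset.mem_filter.mp hb).2
      exact hnp q v f hp h0 hl
    · intro i hi0 hit
      rw [Qent, Finset.card_eq_zero, Finset.filter_eq_empty_iff]
      intro e heE hall
      have hra : Reach E a (i 0) := (Finset.mem_filter.mp hi0).2
      set t1 : Fin (k+1) := ⟨1, by omega⟩ with ht1def
      have ht1 : t1 ≠ 0 := by simp [ht1def, Fin.ext_iff]
      have : Reach E a (i t1) := reach_step hra heE (hall 0) (hall t1)
      exact hit t1 ht1 (Finset.mem_filter.mpr ⟨Finset.mem_univ _, this⟩)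
  exact ⟨fun h => by_contra fun hnc => h (dir2 hnc), dir1⟩
end

section
/- For any k-uniform hypergraph G with incidence Q-tensor Q* and any real vector x of dimension n, the homogeneous form x^T(Q* x) equals the sum over all edges e of G of (Σ_{i ∈ e} x_i)^k. Consequently, when k is even, Q* is positive semi-definite. -/
/-- The homogeneous form of the incidence Q-tensor equals
`∑_{e ∈ E} (∑_{i ∈ e} x_i)^k`; consequently for even `k` the tensor is
positive semi-definite. -/
theorem qstar_form_eq_and_psd {n k : ℕ} (E : Finset (Finset (Fin n)))
    (hunif : ∀ e ∈ E, e.card = k) :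
    (∀ x : Fin n → ℝ,
        ∑ i : Fin k → Fin n, (Qent E i : ℝ) * ∏ t, x (i t)
          = ∑ e ∈ E, (∑ j ∈ e, x j) ^ k) ∧
    (Even k → ∀ x : Fin n → ℝ,
        0 ≤ ∑ i : Fin k → Fin n, (Qent E i : ℝ) * ∏ t, x (i t)) := by
  have key : ∀ x : Fin n → ℝ,
      ∑ i : Fin k → Fin n, (Qent E i : ℝ) * ∏ t, x (i t)
        = ∑ e ∈ E, (∑ j ∈ e, x j) ^ k := by
    intro x
    have h1 : ∀ i : Fin k → Fin n,
        (Qent E i : ℝ) * ∏ t, x (i t)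
          = ∑ e ∈ E, if (∀ t, i t ∈ e) then (∏ t, x (i t)) else 0 := by
      intro i
      rw [← Finset.sum_filter]
      simp [Qent, Finset.sum_const, nsmul_eq_mul]
    rw [Finset.sum_congr rfl fun i _ => h1 i, Finset.sum_comm]
    refine Finset.sum_congr rfl fun e _ => ?_
    have : ∑ i : Fin k → Fin n, (if (∀ t, i t ∈ e) then (∏ t, x (i t)) else 0)
        = ∑ i ∈ Fintype.piFinset (fun _ : Fin k => e), ∏ t, x (i t) := by
      rw [← Finset.sum_filter]
      refine Finset.sum_congr ?_ fun _ _ => rfl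
      ext i
      simp [Fintype.mem_piFinset]
    rw [this, ← Finset.prod_univ_sum]
    simp [Finset.prod_const]
  exact ⟨key, fun hk x => by
    rw [key x]
    exact Finset.sum_nonneg fun e _ => hk.pow_nonneg _⟩
end

section
/- Let G be a connected hypergraph and let G' be obtained from G by moving edges e_1,...,e_r (r ≥ 1) from vertices v_1,...,v_r to a vertex u (where u ∉ e_i, v_i ∈ e_i, and e_i' = (e_i \ {v_i}) ∪ {u}), with G' having no multiple edges. If x is the positive eigenvector of the incidence Q-tensor Q*(G) corresponding to ρ(Q*(G)) with ‖x‖_k = 1, and x_u ≥ max_i x_{v_i}, then ρ(Q*(G')) > ρ(Q*(G)). -/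
/-- The spectral radius of the incidence Q-tensor, via the variational
characterization for symmetric nonnegative tensors. -/
noncomputable def rhoQ {n : ℕ} (k : ℕ) (E : Finset (Finset (Fin n))) : ℝ :=
  sSup {y | ∃ x : Fin n → ℝ, (∀ i, 0 ≤ x i) ∧ (∑ i, x i ^ k) = 1 ∧
    y = ∑ e ∈ E, (∑ i ∈ e, x i) ^ k}


lemma pow_lower (m : ℕ) (a t : ℝ) (ha : 0 ≤ a) (ht : 0 ≤ t) :
    a ^ (m + 1) + (m + 1 : ℕ) * a ^ m * t ≤ (a + t) ^ (m + 1) := by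
  induction m with
  | zero => push_cast; nlinarith
  | succ m ih =>
    have h1 : (0:ℝ) ≤ a ^ m := pow_nonneg ha m
    have hmono := mul_le_mul_of_nonneg_left ih (by linarith : (0:ℝ) ≤ a + t)
    have h3 : (a + t) ^ (m + 1 + 1) = (a + t) * (a + t) ^ (m + 1) := by ring
    have hnn : (0:ℝ) ≤ ((m:ℝ)+1) * a^m * t^2 := by positivity
    have key : (a+t) * (a^(m+1) + ((m:ℝ)+1) * a^m * t)
        = a ^ (m+1+1) + ((m:ℝ)+1+1) * a^(m+1)*t + ((m:ℝ)+1)*a^m*t^2 := by ring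
    rw [h3]
    push_cast at hmono ⊢
    linarith [key]

lemma pow_upper (m : ℕ) (a t : ℝ) (ha : 0 ≤ a) (ht : 0 ≤ t) (ht1 : t ≤ 1) :
    (a + t) ^ (m + 1) ≤ a ^ (m + 1) + (m + 1 : ℕ) * a ^ m * t
      + 2 ^ (m + 1) * (m + 1 : ℕ) * (a + 1) ^ (m + 1) * t ^ 2 := by
  induction m with
  | zero => push_cast; nlinarith
  | succ m ih =>
    have h1 : (0:ℝ) ≤ a ^ m := pow_nonneg ha m
    have h7 : (0:ℝ) ≤ (a+1) ^ (m+1) := by positivity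
    have h8 : (0:ℝ) ≤ (a+1) ^ (m+1+1) := by positivity
    have p1 : a * (a+1) ^ (m+1) ≤ (a+1) ^ (m+1+1) := by
      have h : (a+1) ^ (m+1+1) = (a+1) * (a+1)^(m+1) := by ring
      linarith [h]
    have p2 : a ^ m ≤ (a+1) ^ (m+1+1) := by
      calc a ^ m ≤ (a+1) ^ m := pow_le_pow_left₀ ha (by linarith) m
        _ ≤ (a+1) ^ (m+1+1) := pow_le_pow_right₀ (by linarith) (by omega)
    have p3 : (a+1) ^ (m+1) * t ≤ (a+1) ^ (m+1+1) := by
      calc (a+1) ^ (m+1) * t ≤ (a+1) ^ (m+1) * 1 := mul_le_mul_of_nonneg_left ht1 h7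
        _ ≤ (a+1) ^ (m+1+1) := by
            rw [mul_one]; exact pow_le_pow_right₀ (by linarith) (by omega)
    have hm2 : ((m:ℝ)+1+1) ≤ 2 * 2 ^ (m+1) := by
      have hn : m+1+1 ≤ 2*2^(m+1) := by have := @Nat.lt_two_pow_self (m+1); omega
      have h' := (Nat.cast_le (α := ℝ)).2 hn
      push_cast at h'
      linarith
    have hc1 : (0:ℝ) ≤ ((m:ℝ)+1) * 2 ^ (m+1) := by positivity
    have q1 := mul_le_mul_of_nonneg_left p1 hc1
    have q2 := mul_le_mul_of_nonneg_left p2 (by positivity : (0:ℝ) ≤ (m:ℝ)+1)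
    have q3 := mul_le_mul_of_nonneg_left p3 hc1
    have q4 := mul_le_mul_of_nonneg_left hm2 h8
    have key : ((m:ℝ)+1) * 2^(m+1) * (a * (a+1)^(m+1)) + ((m:ℝ)+1) * a^m
        + ((m:ℝ)+1) * 2^(m+1) * ((a+1)^(m+1) * t)
        ≤ 2 * 2^(m+1) * ((m:ℝ)+1+1) * (a+1)^(m+1+1) := by
      linarith [q1, q2, q3, q4, h8]
    have hmono := mul_le_mul_of_nonneg_left ih (by linarith : (0:ℝ) ≤ a + t)
    have tkey := mul_le_mul_of_nonneg_left key (sq_nonneg t)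
    have h3 : (a + t) ^ (m + 1 + 1) = (a + t) * (a + t) ^ (m + 1) := by ring
    have key2 : (a+t) * (a^(m+1) + ((m:ℝ)+1)*a^m*t + 2^(m+1)*((m:ℝ)+1)*(a+1)^(m+1)*t^2)
        = a^(m+1+1) + ((m:ℝ)+1+1)*a^(m+1)*t
          + (t^2 * (((m:ℝ)+1)*2^(m+1)*(a*(a+1)^(m+1)) + ((m:ℝ)+1)*a^m
              + ((m:ℝ)+1)*2^(m+1)*((a+1)^(m+1)*t))) := by ring
    have key3 : (2:ℝ)^(m+1+1) * ((m:ℝ)+1+1) * (a+1)^(m+1+1) * t^2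
        = t^2 * (2 * 2^(m+1) * ((m:ℝ)+1+1) * (a+1)^(m+1+1)) := by ring
    rw [h3]
    push_cast at hmono tkey ⊢
    linarith [key2, key3]

/-- Moving edges `e 1, …, e r` from `v 1, …, v r` to `u` strictly increases the
incidence Q-spectral radius, provided the principal eigenvector `x` of `Q*(G)`
satisfies `x_u ≥ max_i x_{v_i}` and the new hypergraph has no multiple edges. -/
theorem rhoQ_lt_of_moving_edges {n k : ℕ} (hk : 2 ≤ k)
    (E : Finset (Finset (Fin n))) (hunif : ∀ e ∈ E, e.card = k)
    (hconn : HConnected E)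
    (r : ℕ) (hr : 1 ≤ r) (e : Fin r → Finset (Fin n)) (v : Fin r → Fin n)
    (u : Fin n) (he : ∀ i, e i ∈ E) (heinj : Function.Injective e)
    (hu : ∀ i, u ∉ e i) (hv : ∀ i, v i ∈ e i)
    (E' : Finset (Finset (Fin n)))
    (hE' : E' = (E \ Finset.image e Finset.univ) ∪
      Finset.image (fun i => insert u ((e i).erase (v i))) Finset.univ)
    (hnomult : Function.Injective (fun i => insert u ((e i).erase (v i))) ∧
      ∀ i, insert u ((e i).erase (v i)) ∉ E \ Finset.image e Finset.univ)
    (x : Fin n → ℝ) (hxpos : ∀ i, 0 < x i) (hxnorm : ∑ i, x i ^ k = 1)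
    (heig : ∀ i : Fin n,
      ∑ f ∈ E.filter (fun f => i ∈ f), (∑ j ∈ f, x j) ^ (k - 1)
        = rhoQ k E * x i ^ (k - 1))
    (hxu : ∀ i, x (v i) ≤ x u) :
    rhoQ k E < rhoQ k E' := by
  have hk1 : k - 1 + 1 = k := by omega
  set ρ := rhoQ k E with hρ
  set σ : Finset (Fin n) → ℝ := fun f => ∑ j ∈ f, x j with hσ
  set e' : Fin r → Finset (Fin n) := fun i => insert u ((e i).erase (v i)) with he'def
  -- basic positivity
  have hσnn : ∀ f : Finset (Fin n), 0 ≤ σ f :=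
    fun f => Finset.sum_nonneg fun j _ => (hxpos j).le
  have hσpos : ∀ i, 0 < σ (e i) :=
    fun i => Finset.sum_pos (fun j _ => hxpos j) ⟨v i, hv i⟩
  -- the eigenvalue identity summed: ∑_{f ∈ E} σ f ^ k = ρ
  have hswap : ∑ i, ∑ f ∈ E.filter (fun f => i ∈ f), (x i * σ f ^ (k-1))
      = ∑ f ∈ E, ∑ i ∈ f, x i * σ f ^ (k-1) := by
    simp_rw [Finset.sum_filter]
    rw [Finset.sum_comm]
    refine Finset.sum_congr rfl fun f hf => ?_
    rw [Finset.sum_ite_mem, Finset.univ_inter]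
  have hS : ∑ f ∈ E, σ f ^ k = ρ := by
    have h1 : ∀ i, x i * (∑ f ∈ E.filter (fun f => i ∈ f), σ f ^ (k-1)) = ρ * x i ^ k := by
      intro i
      rw [heig i]
      calc x i * (ρ * x i ^ (k-1)) = ρ * (x i ^ (k-1) * x i) := by ring
        _ = ρ * x i ^ k := by rw [← pow_succ, hk1]
    calc ∑ f ∈ E, σ f ^ k
        = ∑ f ∈ E, ∑ i ∈ f, x i * σ f ^ (k-1) := by
          refine Finset.sum_congr rfl fun f hf => ?_
          rw [← Finset.sum_mul]
          show σ f ^ k = σ f * σ f ^ (k-1)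
          rw [← pow_succ', hk1]
      _ = ∑ i, ∑ f ∈ E.filter (fun f => i ∈ f), (x i * σ f ^ (k-1)) := hswap.symm
      _ = ∑ i, x i * (∑ f ∈ E.filter (fun f => i ∈ f), σ f ^ (k-1)) := by
          simp_rw [Finset.mul_sum]
      _ = ∑ i, ρ * x i ^ k := Finset.sum_congr rfl fun i _ => h1 i
      _ = ρ := by rw [← Finset.mul_sum, hxnorm, mul_one]
  have hρpos : 0 < ρ := by
    rw [← hS]
    have h0 : (0:ℝ) < σ (e ⟨0, hr⟩) ^ k := pow_pos (hσpos _) k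
    have h2 := Finset.single_le_sum (f := fun f => σ f ^ k)
      (fun f _ => pow_nonneg (hσnn f) k) (he ⟨0, hr⟩)
    linarith
  -- splitting sums over E and E'
  have hsub : Finset.image e Finset.univ ⊆ E := by
    intro f hf
    simp only [Finset.mem_image, Finset.mem_univ, true_and] at hf
    obtain ⟨i, rfl⟩ := hf
    exact he i
  have hsplitE : ∀ g : Finset (Fin n) → ℝ,
      ∑ f ∈ E, g f = ∑ f ∈ E \ Finset.image e Finset.univ, g f + ∑ i, g (e i) := by
    intro g
    rw [← Finset.sum_sdiff hsub, Finset.sum_image (fun a _ b _ h => heinj h)]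
  have hdisj : Disjoint (E \ Finset.image e Finset.univ) (Finset.image e' Finset.univ) := by
    rw [Finset.disjoint_right]
    intro f hf
    simp only [Finset.mem_image, Finset.mem_univ, true_and] at hf
    obtain ⟨i, rfl⟩ := hf
    exact hnomult.2 i
  have hsplitE' : ∀ g : Finset (Fin n) → ℝ,
      ∑ f ∈ E', g f = ∑ f ∈ E \ Finset.image e Finset.univ, g f + ∑ i, g (e' i) := by
    intro g
    rw [hE', Finset.sum_union hdisj, Finset.sum_image (fun a _ b _ h => hnomult.1 h)]
  -- values of σ on the new edges
  have hσ'val : ∀ i, σ (e' i) = σ (e i) - x (v i) + x u := by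
    intro i
    have hu' : u ∉ (e i).erase (v i) := fun h => hu i (Finset.mem_of_mem_erase h)
    show ∑ j ∈ insert u ((e i).erase (v i)), x j = _
    rw [Finset.sum_insert hu', Finset.sum_erase_eq_sub (hv i)]
    ring
  have hσ'ge : ∀ i, σ (e i) ≤ σ (e' i) := by
    intro i
    have := hxu i
    rw [hσ'val i]
    linarith
  -- constants
  have hkR : (0:ℝ) < k := by exact_mod_cast (by omega : 0 < k)
  have _ : Nonempty (Fin r) := ⟨⟨0, hr⟩⟩
  set D := ∑ i : Fin r, σ (e i) ^ (k-1) with hDdef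
  have hD : 0 < D :=
    Finset.sum_pos (fun i _ => pow_pos (hσpos i) _) Finset.univ_nonempty
  set C := (2:ℝ)^k * k * (x u + 1)^k with hCdef
  have hC : 0 < C := by
    have := hxpos u
    positivity
  set t := min 1 ((k:ℝ)*D/(2*ρ*C)) with htdef
  have ht0 : 0 < t := lt_min one_pos (by positivity)
  have ht1 : t ≤ 1 := min_le_left _ _
  have htkey : ρ*C*t ≤ (k:ℝ)*D/2 := by
    have h := min_le_right 1 ((k:ℝ)*D/(2*ρ*C))
    calc ρ*C*t ≤ ρ*C*((k:ℝ)*D/(2*ρ*C)) := by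
          exact mul_le_mul_of_nonneg_left h (by positivity)
      _ = (k:ℝ)*D/2 := by field_simp
  -- the perturbed vector
  set z : Fin n → ℝ := fun j => x j + if j = u then t else 0 with hzdef
  have hz : ∀ j, 0 < z j := by
    intro j
    show 0 < x j + if j = u then t else 0
    split
    · exact add_pos (hxpos j) ht0
    · simpa using hxpos j
  have hzsum : ∀ f : Finset (Fin n), ∑ j ∈ f, z j = σ f + (if u ∈ f then t else 0) := by
    intro f
    show ∑ j ∈ f, (x j + if j = u then t else 0) = _
    rw [Finset.sum_add_distrib]
    congr 1
    exact Finset.sum_ite_eq' f u (fun _ => t)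
  set N := ∑ j, z j ^ k with hNdef
  have hNpos : 0 < N := Finset.sum_pos (fun j _ => pow_pos (hz j) k) ⟨u, Finset.mem_univ u⟩
  -- upper bound on N
  have hNub : N ≤ 1 + (k:ℝ) * x u ^ (k-1) * t + C * t^2 := by
    have hper : ∀ j, z j ^ k = x j ^ k + (if j = u then ((x u + t)^k - x u ^ k) else 0) := by
      intro j
      by_cases h : j = u
      · subst h; show (x j + if j = j then t else 0)^k = _; simp
      · show (x j + if j = u then t else 0)^k = _; simp [h]
    have hup := pow_upper (k-1) (x u) t (hxpos u).le ht0.le ht1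
    rw [hk1] at hup
    calc N = ∑ j, (x j ^ k + if j = u then ((x u + t)^k - x u ^ k) else 0) :=
          Finset.sum_congr rfl fun j _ => hper j
      _ = 1 + ((x u + t)^k - x u ^ k) := by
          rw [Finset.sum_add_distrib, hxnorm,
            Finset.sum_ite_eq' Finset.univ u (fun _ => (x u + t)^k - x u ^ k),
            if_pos (Finset.mem_univ u)]
      _ ≤ 1 + (k:ℝ) * x u ^ (k-1) * t + C * t^2 := by
          rw [hCdef]; push_cast at hup ⊢; linarith
  -- lower bound on L
  set L := ∑ f ∈ E', (∑ j ∈ f, z j)^k with hLdef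
  have hlow : ∀ f : Finset (Fin n),
      σ f ^ k + (k:ℝ) * (σ f ^ (k-1) * (if u ∈ f then t else 0)) ≤ (∑ j ∈ f, z j)^k := by
    intro f
    rw [hzsum f]
    have hw : 0 ≤ (if u ∈ f then t else 0) := by split; exacts [ht0.le, le_rfl]
    have hlo := pow_lower (k-1) (σ f) (if u ∈ f then t else 0) (hσnn f) hw
    rw [hk1] at hlo
    push_cast at hlo ⊢
    linarith
  have hLlb : (∑ f ∈ E', σ f ^ k)
      + (k:ℝ) * ∑ f ∈ E', σ f ^ (k-1) * (if u ∈ f then t else 0) ≤ L := by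
    have h := Finset.sum_le_sum (fun f (_ : f ∈ E') => hlow f)
    rw [Finset.sum_add_distrib, ← Finset.mul_sum] at h
    exact h
  -- ∑_{E'} σ^k ≥ ρ
  have hS' : ρ ≤ ∑ f ∈ E', σ f ^ k := by
    rw [← hS, hsplitE (fun f => σ f ^ k), hsplitE' (fun f => σ f ^ k)]
    have : ∑ i, σ (e i) ^ k ≤ ∑ i, σ (e' i) ^ k :=
      Finset.sum_le_sum fun i _ => pow_le_pow_left₀ (hσnn _) (hσ'ge i) k
    linarith
  -- ∑_{E'} σ^{k-1} w ≥ t ρ x_u^{k-1} + t D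
  have hW : t * (ρ * x u ^ (k-1)) + t * D
      ≤ ∑ f ∈ E', σ f ^ (k-1) * (if u ∈ f then t else 0) := by
    rw [hsplitE' (fun f => σ f ^ (k-1) * (if u ∈ f then t else 0))]
    have h2 : ∀ i : Fin r, σ (e' i) ^ (k-1) * (if u ∈ e' i then t else 0)
        = σ (e' i) ^ (k-1) * t := by
      intro i
      rw [if_pos]
      show u ∈ insert u ((e i).erase (v i))
      exact Finset.mem_insert_self u _
    have h1 : ∑ f ∈ E \ Finset.image e Finset.univ, σ f ^ (k-1) * (if u ∈ f then t else 0)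
        = ρ * x u ^ (k-1) * t := by
      have hiz : ∀ i : Fin r, σ (e i) ^ (k-1) * (if u ∈ e i then t else 0) = 0 := by
        intro i
        rw [if_neg (hu i), mul_zero]
      have hE0 := hsplitE (fun f => σ f ^ (k-1) * (if u ∈ f then t else 0))
      rw [Finset.sum_congr rfl (fun i _ => hiz i), Finset.sum_const, smul_zero, add_zero] at hE0
      rw [← hE0]
      have : ∑ f ∈ E, σ f ^ (k-1) * (if u ∈ f then t else 0)
          = (∑ f ∈ E.filter (fun f => u ∈ f), σ f ^ (k-1)) * t := by
        rw [Finset.sum_mul, Finset.sum_filter]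
        refine Finset.sum_congr rfl fun f _ => ?_
        split <;> simp
      rw [this, heig u]
    rw [h1, Finset.sum_congr rfl (fun i _ => h2 i)]
    have h3 : D ≤ ∑ i, σ (e' i) ^ (k-1) :=
      Finset.sum_le_sum fun i _ => pow_le_pow_left₀ (hσnn _) (hσ'ge i) _
    have h4 : t * D ≤ t * ∑ i, σ (e' i) ^ (k-1) :=
      mul_le_mul_of_nonneg_left h3 ht0.le
    have h5 : ∑ i, σ (e' i) ^ (k-1) * t = t * ∑ i, σ (e' i) ^ (k-1) := by
      rw [Finset.mul_sum]; exact Finset.sum_congr rfl fun i _ => mul_comm _ _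
    rw [h5]
    linarith
  -- the main strict inequality ρ N < L
  have hmain : ρ * N < L := by
    have h1 : ρ * N ≤ ρ * (1 + (k:ℝ) * x u ^ (k-1) * t + C * t^2) :=
      mul_le_mul_of_nonneg_left hNub hρpos.le
    have h2 := mul_le_mul_of_nonneg_left hW (le_of_lt hkR)
    have h3 : (ρ*C*t)*t ≤ ((k:ℝ)*D/2)*t := mul_le_mul_of_nonneg_right htkey ht0.le
    have h4 : 0 < (k:ℝ)*D/2*t := by positivity
    nlinarith [hLlb, hS', h1, h2, h3, h4]
  -- normalize and conclude via sSup
  set c := N ^ (-(1:ℝ)/(k:ℝ)) with hcdef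
  have hc0 : (0:ℝ) ≤ c := Real.rpow_nonneg hNpos.le _
  have hck : c ^ k = N⁻¹ := by
    rw [hcdef, ← Real.rpow_natCast (N ^ (-(1:ℝ)/(k:ℝ))) k, ← Real.rpow_mul hNpos.le]
    have : (-(1:ℝ)/(k:ℝ)) * (k:ℕ) = -1 := by
      field_simp
    rw [this, Real.rpow_neg_one]
  have hnorm' : ∑ j, (c * z j)^k = 1 := by
    simp_rw [mul_pow]
    rw [← Finset.mul_sum, hck, ← hNdef, inv_mul_cancel₀ hNpos.ne']
  have hval : ∑ f ∈ E', (∑ j ∈ f, c * z j)^k = N⁻¹ * L := by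
    simp_rw [← Finset.mul_sum, mul_pow, hck]
    rw [← Finset.mul_sum]
  have hbdd : BddAbove {y | ∃ w : Fin n → ℝ, (∀ i, 0 ≤ w i) ∧ (∑ i, w i ^ k) = 1 ∧
      y = ∑ f ∈ E', (∑ i ∈ f, w i) ^ k} := by
    refine ⟨(E'.card : ℝ) * (n:ℝ)^k, ?_⟩
    rintro y ⟨w, hw0, hwn, rfl⟩
    have hw1 : ∀ i, w i ≤ 1 := by
      intro i
      have h1 : w i ^ k ≤ 1 := by
        rw [← hwn]
        exact Finset.single_le_sum (fun j _ => pow_nonneg (hw0 j) k) (Finset.mem_univ i)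
      exact (pow_le_one_iff_of_nonneg (hw0 i) (by omega)).1 h1
    calc ∑ f ∈ E', (∑ i ∈ f, w i)^k ≤ ∑ f ∈ E', (n:ℝ)^k := by
          refine Finset.sum_le_sum fun f hf => ?_
          have h2 : ∑ i ∈ f, w i ≤ (n:ℝ) := by
            calc ∑ i ∈ f, w i ≤ ∑ i ∈ f, 1 := Finset.sum_le_sum fun i _ => hw1 i
              _ = (f.card : ℝ) := by simp
              _ ≤ (n:ℝ) := by
                  have := Finset.card_le_card (Finset.subset_univ f)
                  rw [Finset.card_univ, Fintype.card_fin] at this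
                  exact_mod_cast this
          exact pow_le_pow_left₀ (Finset.sum_nonneg fun i _ => hw0 i) h2 k
      _ = (E'.card : ℝ) * (n:ℝ)^k := by rw [Finset.sum_const, nsmul_eq_mul]
  have hmem : N⁻¹ * L ∈ {y | ∃ w : Fin n → ℝ, (∀ i, 0 ≤ w i) ∧ (∑ i, w i ^ k) = 1 ∧
      y = ∑ f ∈ E', (∑ i ∈ f, w i) ^ k} :=
    ⟨fun j => c * z j, fun j => mul_nonneg hc0 (hz j).le, hnorm', hval.symm⟩
  have hV : ρ < N⁻¹ * L := by
    rw [inv_mul_eq_div, lt_div_iff₀ hNpos]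
    linarith [hmain]
  calc ρ < N⁻¹ * L := hV
    _ ≤ rhoQ k E' := le_csSup hbdd hmem
end

section
/- Let G be a connected hypergraph and G' obtained from G by moving edges e_1,...,e_r from v_1,...,v_r to u (u ∉ e_i, v_i ∈ e_i, e_i' = (e_i\{v_i}) ∪ {u}) with no multiple edges in G'. If x is the principal eigenvector of the adjacency tensor A(G) and x_u ≥ max_i x_{v_i}, then ρ(A(G')) > ρ(A(G)). -/
/-- The adjacency spectral radius of a `k`-uniform hypergraph, via the
variational characterization (`xᵀ(A x) = ∑_{e ∈ E} k ∏_{i ∈ e} x_i`). -/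
noncomputable def rhoA {n : ℕ} (k : ℕ) (E : Finset (Finset (Fin n))) : ℝ :=
  sSup {y | ∃ x : Fin n → ℝ, (∀ i, 0 ≤ x i) ∧ (∑ i, x i ^ k) = 1 ∧
    y = ∑ e ∈ E, (k : ℝ) * ∏ i ∈ e, x i}

lemma hyp_double_count {n k : ℕ} (E : Finset (Finset (Fin n))) (hunif : ∀ e ∈ E, e.card = k)
    (w : Fin n → ℝ) :
    ∑ f ∈ E, (k:ℝ) * ∏ j ∈ f, w j
      = ∑ i : Fin n, w i * ∑ f ∈ E.filter (fun f => i ∈ f), ∏ j ∈ f.erase i, w j := by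
  have h1 : ∀ f ∈ E, (k:ℝ) * ∏ j ∈ f, w j
      = ∑ i : Fin n, (if i ∈ f then w i * ∏ j ∈ f.erase i, w j else 0) := by
    intro f hf
    rw [Finset.sum_ite_mem, Finset.univ_inter]
    calc (k:ℝ) * ∏ j ∈ f, w j = ∑ _i ∈ f, ∏ j ∈ f, w j := by
          rw [Finset.sum_const, hunif f hf, nsmul_eq_mul]
      _ = ∑ i ∈ f, w i * ∏ j ∈ f.erase i, w j :=
          Finset.sum_congr rfl fun i hi => (Finset.mul_prod_erase f w hi).symm
  rw [Finset.sum_congr rfl h1, Finset.sum_comm]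
  exact Finset.sum_congr rfl fun i _ => by
    rw [Finset.mul_sum, Finset.sum_filter]


/-- Moving edges `e 1, …, e r` from `v 1, …, v r` to `u` strictly increases the
adjacency spectral radius, provided the principal eigenvector `x` of `A(G)`
satisfies `x_u ≥ max_i x_{v_i}` and the new hypergraph has no multiple edges. -/
theorem rhoA_lt_of_moving_edges {n k : ℕ} (hk : 2 ≤ k)
    (E : Finset (Finset (Fin n))) (hunif : ∀ e ∈ E, e.card = k)
    (hconn : HConnected E)
    (r : ℕ) (hr : 1 ≤ r) (e : Fin r → Finset (Fin n)) (v : Fin r → Fin n)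
    (u : Fin n) (he : ∀ i, e i ∈ E) (heinj : Function.Injective e)
    (hu : ∀ i, u ∉ e i) (hv : ∀ i, v i ∈ e i)
    (E' : Finset (Finset (Fin n)))
    (hE' : E' = (E \ Finset.image e Finset.univ) ∪
      Finset.image (fun i => insert u ((e i).erase (v i))) Finset.univ)
    (hnomult : Function.Injective (fun i => insert u ((e i).erase (v i))) ∧
      ∀ i, insert u ((e i).erase (v i)) ∉ E \ Finset.image e Finset.univ)
    (x : Fin n → ℝ) (hxpos : ∀ i, 0 < x i) (hxnorm : ∑ i, x i ^ k = 1)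
    (heig : ∀ i : Fin n,
      ∑ f ∈ E.filter (fun f => i ∈ f), ∏ j ∈ f.erase i, x j
        = rhoA k E * x i ^ (k - 1))
    (hxu : ∀ i, x (v i) ≤ x u) :
    rhoA k E < rhoA k E' := by
  clear hconn
  set ρ := rhoA k E with hρdef
  have hkpos : (0:ℝ) < k := by positivity
  -- basic objects
  set Q : Fin r → ℝ := fun i => ∏ j ∈ (e i).erase (v i), x j with hQdef
  have hQpos : ∀ i, 0 < Q i := fun i => Finset.prod_pos fun j _ => hxpos j
  set P : ℝ := ∑ i, Q i with hPdef
  have hPpos : 0 < P :=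
    Finset.sum_pos (fun i _ => hQpos i) ⟨⟨0, hr⟩, Finset.mem_univ _⟩
  set e' : Fin r → Finset (Fin n) := fun i => insert u ((e i).erase (v i)) with he'def
  have hu' : ∀ i, u ∉ (e i).erase (v i) := fun i h => hu i (Finset.mem_of_mem_erase h)
  have hcard' : ∀ i, (e' i).card = k := by
    intro i
    have h1 : 1 ≤ (e i).card := by rw [hunif _ (he i)]; omega
    rw [he'def]
    simp only
    rw [Finset.card_insert_of_notMem (hu' i), Finset.card_erase_of_mem (hv i),
      hunif _ (he i)]
    omega
  have himsub : Finset.image e Finset.univ ⊆ E := by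
    intro f hf
    obtain ⟨i, _, rfl⟩ := Finset.mem_image.mp hf
    exact he i
  have hunif' : ∀ f ∈ E', f.card = k := by
    intro f hf
    rw [hE'] at hf
    rcases Finset.mem_union.mp hf with h | h
    · exact hunif f (Finset.mem_sdiff.mp h).1
    · obtain ⟨i, _, rfl⟩ := Finset.mem_image.mp h
      exact hcard' i
  -- splitting sums over E'
  have hsplit : ∀ F : Finset (Fin n) → ℝ, ∑ f ∈ E', F f
      = ((∑ f ∈ E, F f) - ∑ i, F (e i)) + ∑ i, F (e' i) := by
    intro F
    have hdisj : Disjoint (E \ Finset.image e Finset.univ)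
        (Finset.image (fun i => insert u ((e i).erase (v i))) Finset.univ) := by
      rw [Finset.disjoint_right]
      intro f hf
      obtain ⟨i, _, rfl⟩ := Finset.mem_image.mp hf
      exact hnomult.2 i
    rw [hE', Finset.sum_union hdisj,
      Finset.sum_image (fun a _ b _ h => hnomult.1 h),
      Finset.sum_sdiff_eq_sub himsub,
      Finset.sum_image (fun a _ b _ h => heinj h)]
  -- value of the Rayleigh quotient at x on E
  have hrhoval : ∑ f ∈ E, (k:ℝ) * ∏ j ∈ f, x j = ρ := by
    rw [hyp_double_count E hunif x]
    have hterm : ∀ i : Fin n,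
        x i * ∑ f ∈ E.filter (fun f => i ∈ f), ∏ j ∈ f.erase i, x j
          = ρ * x i ^ k := by
      intro i
      rw [heig i]
      have hx : x i ^ k = x i ^ (k - 1) * x i := by
        rw [← pow_succ]
        congr 1
        omega
      rw [hx]; ring
    rw [Finset.sum_congr rfl fun i _ => hterm i, ← Finset.mul_sum, hxnorm, mul_one]
  have hprodE : ∀ i, ∏ j ∈ e i, x j = x (v i) * Q i :=
    fun i => (Finset.mul_prod_erase _ x (hv i)).symm
  have hprodE' : ∀ i, ∏ j ∈ e' i, x j = x u * Q i :=
    fun i => Finset.prod_insert (hu' i)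
  -- g0
  set g0 : ℝ := ∑ f ∈ E', (k:ℝ) * ∏ j ∈ f, x j with hg0def
  have hg0 : g0 = ρ + ∑ i, (k:ℝ) * ((x u - x (v i)) * Q i) := by
    have hBA : (∑ i, (k:ℝ) * ∏ j ∈ e' i, x j) - (∑ i, (k:ℝ) * ∏ j ∈ e i, x j)
        = ∑ i, (k:ℝ) * ((x u - x (v i)) * Q i) := by
      rw [← Finset.sum_sub_distrib]
      exact Finset.sum_congr rfl fun i _ => by rw [hprodE, hprodE']; ring
    have := hsplit (fun f => (k:ℝ) * ∏ j ∈ f, x j)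
    rw [hg0def, this, hrhoval]
    linarith [hBA]
  have hg0ge : ρ ≤ g0 := by
    rw [hg0]
    have : 0 ≤ ∑ i, (k:ℝ) * ((x u - x (v i)) * Q i) :=
      Finset.sum_nonneg fun i _ =>
        mul_nonneg (Nat.cast_nonneg k)
          (mul_nonneg (by linarith [hxu i]) (hQpos i).le)
    linarith
  -- S
  set S0 : ℝ := ρ * x u ^ (k-1) + P with hS0def
  have hS : ∑ f ∈ E', (if u ∈ f then ∏ j ∈ f.erase u, x j else 0) = S0 := by
    rw [hsplit (fun f => if u ∈ f then ∏ j ∈ f.erase u, x j else 0)]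
    have h1 : ∑ f ∈ E, (if u ∈ f then ∏ j ∈ f.erase u, x j else 0) = ρ * x u ^ (k-1) := by
      rw [← Finset.sum_filter]
      exact heig u
    have h2 : ∑ i, (if u ∈ e i then ∏ j ∈ (e i).erase u, x j else 0) = 0 :=
      Finset.sum_eq_zero fun i _ => if_neg (hu i)
    have h3 : ∑ i, (if u ∈ e' i then ∏ j ∈ (e' i).erase u, x j else 0) = P := by
      refine Finset.sum_congr rfl fun i _ => ?_
      rw [if_pos (Finset.mem_insert_self u _)]
      rw [he'def]
      simp only
      rw [Finset.erase_insert (hu' i)]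
    rw [h1, h2, h3, hS0def]
    ring
  -- product of updated vector
  have hyprod : ∀ (t : ℝ) (f : Finset (Fin n)),
      ∏ j ∈ f, Function.update x u (x u + t) j
        = (∏ j ∈ f, x j) + t * (if u ∈ f then ∏ j ∈ f.erase u, x j else 0) := by
    intro t f
    by_cases hf : u ∈ f
    · have h1 : ∏ j ∈ f.erase u, Function.update x u (x u + t) j
          = ∏ j ∈ f.erase u, x j :=
        Finset.prod_congr rfl fun j hj =>
          Function.update_of_ne (Finset.ne_of_mem_erase hj) _ _
      rw [if_pos hf, ← Finset.mul_prod_erase f _ hf, h1, Function.update_self,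
        ← Finset.mul_prod_erase f x hf]
      ring
    · rw [if_neg hf, mul_zero, add_zero]
      exact Finset.prod_congr rfl fun j hj =>
        Function.update_of_ne (fun h => hf (by rw [← h]; exact hj)) _ _
  -- g(t)
  have hg : ∀ t : ℝ,
      ∑ f ∈ E', (k:ℝ) * ∏ j ∈ f, Function.update x u (x u + t) j
        = g0 + (k:ℝ) * t * S0 := by
    intro t
    have hterm : ∀ f : Finset (Fin n),
        (k:ℝ) * ∏ j ∈ f, Function.update x u (x u + t) j
          = (k:ℝ) * ∏ j ∈ f, x j
            + (k:ℝ) * t * (if u ∈ f then ∏ j ∈ f.erase u, x j else 0) := by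
      intro f
      rw [hyprod t f]
      ring
    calc ∑ f ∈ E', (k:ℝ) * ∏ j ∈ f, Function.update x u (x u + t) j
        = ∑ f ∈ E', ((k:ℝ) * ∏ j ∈ f, x j
            + (k:ℝ) * t * (if u ∈ f then ∏ j ∈ f.erase u, x j else 0)) :=
          Finset.sum_congr rfl fun f _ => hterm f
      _ = (∑ f ∈ E', (k:ℝ) * ∏ j ∈ f, x j)
            + (k:ℝ) * t * ∑ f ∈ E', (if u ∈ f then ∏ j ∈ f.erase u, x j else 0) := by
          rw [Finset.sum_add_distrib, Finset.mul_sum]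
      _ = g0 + (k:ℝ) * t * S0 := by rw [hS, ← hg0def]
  -- N(t)
  have hN : ∀ t : ℝ,
      ∑ i, Function.update x u (x u + t) i ^ k = 1 - x u ^ k + (x u + t) ^ k := by
    intro t
    have hfun : ∀ j, Function.update x u (x u + t) j ^ k
        = Function.update (fun i => x i ^ k) u ((x u + t) ^ k) j := by
      intro j
      by_cases hj : j = u
      · subst hj; simp
      · simp [Function.update_of_ne hj]
    rw [Finset.sum_congr rfl fun j _ => hfun j,
      Finset.sum_update_of_mem (Finset.mem_univ u)]
    have hrest : ∑ i ∈ Finset.univ \ {u}, x i ^ k = 1 - x u ^ k := by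
      rw [Finset.sum_sdiff_eq_sub (Finset.singleton_subset_iff.mpr (Finset.mem_univ u)),
        hxnorm, Finset.sum_singleton]
    rw [hrest]
    ring
  -- derivative argument: find t > 0 with Ψ t > 0
  set Ψ : ℝ → ℝ := fun t => g0 + (k:ℝ) * t * S0 - ρ * (1 - x u ^ k + (x u + t) ^ k)
    with hΨdef
  have hΨ0 : 0 ≤ Ψ 0 := by
    have : Ψ 0 = g0 - ρ := by rw [hΨdef]; ring
    rw [this]
    linarith
  have hpow : HasDerivAt (fun t : ℝ => (x u + t) ^ k) ((k:ℝ) * x u ^ (k-1)) 0 := by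
    have := (hasDerivAt_pow k (x u + 0)).comp 0
      ((hasDerivAt_const (0:ℝ) (x u)).add (hasDerivAt_id (0:ℝ)))
    simpa [Function.comp_def] using this
  have hΨderiv : HasDerivAt Ψ ((k:ℝ) * P) 0 := by
    have hlin : HasDerivAt (fun t : ℝ => g0 + (k:ℝ) * t * S0) ((k:ℝ) * S0) 0 := by
      have h := (((hasDerivAt_id (0:ℝ)).const_mul (k:ℝ)).mul_const S0).const_add g0
      simpa using h
    have hrhs : HasDerivAt (fun t : ℝ => ρ * (1 - x u ^ k + (x u + t) ^ k))
        (ρ * ((k:ℝ) * x u ^ (k-1))) 0 := by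
      have h := (hpow.const_add (1 - x u ^ k)).const_mul ρ
      simpa using h
    have h := hlin.sub hrhs
    have heq : (k:ℝ) * S0 - ρ * ((k:ℝ) * x u ^ (k-1)) = (k:ℝ) * P := by
      rw [hS0def]; ring
    rw [heq] at h
    exact h
  have hslope := hasDerivAt_iff_tendsto_slope.mp hΨderiv
  have hpos : (0:ℝ) < (k:ℝ) * P := mul_pos hkpos hPpos
  have hslope' : Filter.Tendsto (slope Ψ 0) (nhdsWithin 0 (Set.Ioi 0)) (nhds ((k:ℝ)*P)) :=
    hslope.mono_left (nhdsWithin_mono 0 (fun y hy => ne_of_gt hy))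
  have hev : ∀ᶠ t in nhdsWithin 0 (Set.Ioi 0), 0 < slope Ψ 0 t :=
    hslope'.eventually (eventually_gt_nhds hpos)
  have hmem : ∀ᶠ t in nhdsWithin (0:ℝ) (Set.Ioi 0), t ∈ Set.Ioi (0:ℝ) :=
    self_mem_nhdsWithin
  obtain ⟨t, hslopet, ht⟩ := (hev.and hmem).exists
  have ht0 : (0:ℝ) < t := ht
  have hΨt : 0 < Ψ t := by
    have : slope Ψ 0 t = (Ψ t - Ψ 0) / t := by
      rw [slope_def_field]; ring_nf
    rw [this] at hslopet
    have := (div_pos_iff.mp hslopet)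
    rcases this with ⟨h1, _⟩ | ⟨_, h2⟩
    · linarith
    · linarith
  -- the feasible vector for E'
  have hNpos : 0 < 1 - x u ^ k + (x u + t) ^ k := by
    have h1 : x u ^ k < (x u + t) ^ k := by
      apply pow_lt_pow_left₀ _ (hxpos u).le (by omega)
      linarith
    linarith
  set N : ℝ := 1 - x u ^ k + (x u + t) ^ k with hNdef
  set c : ℝ := N ^ ((k:ℝ)⁻¹) with hcdef
  have hcpos : 0 < c := Real.rpow_pos_of_pos hNpos _
  have hck : c ^ k = N := Real.rpow_inv_natCast_pow hNpos.le (by omega)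
  set z : Fin n → ℝ := fun i => Function.update x u (x u + t) i / c with hzdef
  have hzupd : ∀ i, 0 ≤ Function.update x u (x u + t) i := by
    intro i
    by_cases hi : i = u
    · subst hi; rw [Function.update_self]; linarith [hxpos i, ht0]
    · rw [Function.update_of_ne hi]; exact (hxpos i).le
  have hz0 : ∀ i, 0 ≤ z i := fun i => div_nonneg (hzupd i) hcpos.le
  have hznorm : ∑ i, z i ^ k = 1 := by
    have : ∀ i, z i ^ k = Function.update x u (x u + t) i ^ k / c ^ k := by
      intro i; rw [hzdef]; simp [div_pow]
    rw [Finset.sum_congr rfl fun i _ => this i, ← Finset.sum_div, hN t, hck]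
    field_simp
    exact hNdef.symm
  have hzval : ∑ f ∈ E', (k:ℝ) * ∏ j ∈ f, z j = (g0 + (k:ℝ) * t * S0) / N := by
    have hterm : ∀ f ∈ E', (k:ℝ) * ∏ j ∈ f, z j
        = ((k:ℝ) * ∏ j ∈ f, Function.update x u (x u + t) j) / N := by
      intro f hf
      rw [hzdef]
      simp only
      rw [Finset.prod_div_distrib, Finset.prod_const, hunif' f hf, hck]
      ring
    rw [Finset.sum_congr rfl hterm, ← Finset.sum_div, hg t]
  have hbdd : BddAbove {y | ∃ w : Fin n → ℝ, (∀ i, 0 ≤ w i) ∧ (∑ i, w i ^ k) = 1 ∧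
      y = ∑ f ∈ E', (k : ℝ) * ∏ i ∈ f, w i} := by
    refine ⟨(E'.card : ℝ) * k, ?_⟩
    rintro y ⟨w, hw0, hwn, rfl⟩
    have hwle : ∀ i, w i ≤ 1 := by
      intro i
      by_contra h
      push_neg at h
      have h1 : (1:ℝ) < w i ^ k := one_lt_pow₀ h (by omega)
      have h2 : w i ^ k ≤ ∑ j, w j ^ k :=
        Finset.single_le_sum (fun j _ => pow_nonneg (hw0 j) k) (Finset.mem_univ i)
      rw [hwn] at h2
      linarith
    calc ∑ f ∈ E', (k:ℝ) * ∏ i ∈ f, w i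
        ≤ ∑ _f ∈ E', (k:ℝ) * 1 := by
          refine Finset.sum_le_sum fun f _ => ?_
          exact mul_le_mul_of_nonneg_left
            (Finset.prod_le_one (fun i _ => hw0 i) (fun i _ => hwle i))
            (Nat.cast_nonneg k)
      _ = (E'.card : ℝ) * k := by
          rw [Finset.sum_const, nsmul_eq_mul]; ring
  have hmem' : (g0 + (k:ℝ) * t * S0) / N ∈ {y | ∃ w : Fin n → ℝ, (∀ i, 0 ≤ w i) ∧
      (∑ i, w i ^ k) = 1 ∧ y = ∑ f ∈ E', (k : ℝ) * ∏ i ∈ f, w i} :=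
    ⟨z, hz0, hznorm, hzval.symm⟩
  have hle : (g0 + (k:ℝ) * t * S0) / N ≤ rhoA k E' := le_csSup hbdd hmem'
  have hlt : ρ < (g0 + (k:ℝ) * t * S0) / N := by
    rw [lt_div_iff₀ hNpos]
    have : Ψ t = g0 + (k:ℝ) * t * S0 - ρ * N := by rw [hΨdef, hNdef]
    linarith [hΨt, this ▸ hΨt]
  linarith
end

section
/- The spectral radius of the incidence Q-tensor of the k-uniform hyperstar S_{n,k} with m = (n-1)/(k-1) edges equals (m^{1/(k-1)} + k - 1)^{k-1}. -/
open Finset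

/-- Unnormalized weighted Jensen for `x ^ k`. -/
lemma jensen_pow {ι : Type*} (t : Finset ι) (w y : ι → ℝ)
    (hw : ∀ i ∈ t, 0 ≤ w i) (hy : ∀ i ∈ t, 0 ≤ y i) (k : ℕ) (hk : 1 ≤ k) :
    (∑ i ∈ t, w i * y i) ^ k ≤ (∑ i ∈ t, w i) ^ (k - 1) * ∑ i ∈ t, w i * y i ^ k := by
  set W := ∑ i ∈ t, w i with hW
  rcases eq_or_lt_of_le (Finset.sum_nonneg hw) with h0 | hWpos
  · have hz : ∀ i ∈ t, w i = 0 := fun i hi =>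
      (Finset.sum_eq_zero_iff_of_nonneg hw).mp h0.symm i hi
    have h1 : (∑ i ∈ t, w i * y i) = 0 := Finset.sum_eq_zero fun i hi => by rw [hz i hi, zero_mul]
    have h2 : (∑ i ∈ t, w i * y i ^ k) = 0 := Finset.sum_eq_zero fun i hi => by rw [hz i hi, zero_mul]
    rw [h1, h2, zero_pow (by omega), mul_zero]
  · have hWne : W ≠ 0 := ne_of_gt hWpos
    have key := Real.pow_arith_mean_le_arith_mean_pow t (fun i => w i / W) y
      (fun i hi => div_nonneg (hw i hi) hWpos.le)
      (by rw [← Finset.sum_div, ← hW, div_self hWne]) hy k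
    have e1 : (∑ i ∈ t, w i / W * y i) = (∑ i ∈ t, w i * y i) / W := by
      rw [Finset.sum_div]; exact Finset.sum_congr rfl fun i _ => by ring
    have e2 : (∑ i ∈ t, w i / W * y i ^ k) = (∑ i ∈ t, w i * y i ^ k) / W := by
      rw [Finset.sum_div]; exact Finset.sum_congr rfl fun i _ => by ring
    rw [e1, e2, div_pow, div_le_div_iff₀ (by positivity) hWpos] at key
    have hp : W ^ k = W ^ (k - 1) * W := by
      rw [← pow_succ]; congr 1; omega
    calc (∑ i ∈ t, w i * y i) ^ k
        ≤ ((∑ i ∈ t, w i * y i ^ k) * W ^ k) / W := (le_div_iff₀ hWpos).mpr key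
      _ = W ^ (k - 1) * ∑ i ∈ t, w i * y i ^ k := by
          rw [hp]; field_simp

/-- Per-edge weighted power mean bound. -/
lemma edge_bound {n k : ℕ} (hk : 2 ≤ k) (c : ℝ) (hc : 0 < c)
    (u : Fin n) (S : Finset (Fin n)) (hu : u ∉ S) (hS : S.card = k - 1)
    (x : Fin n → ℝ) (hx : ∀ i, 0 ≤ x i) :
    (x u + ∑ j ∈ S, x j) ^ k ≤
      (c + (k : ℝ) - 1) ^ (k - 1) * (x u ^ k / c ^ (k - 1) + ∑ j ∈ S, x j ^ k) := by
  set w : Fin n → ℝ := fun v => if v = u then c else 1 with hw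
  set y : Fin n → ℝ := fun v => if v = u then x u / c else x v with hy
  have hwn : ∀ i ∈ insert u S, 0 ≤ w i := by
    intro i _; by_cases h : i = u <;> simp [hw, h, hc.le]
  have hyn : ∀ i ∈ insert u S, 0 ≤ y i := by
    intro i _; by_cases h : i = u <;> simp [hy, h, hx, div_nonneg (hx u) hc.le]
  have h := jensen_pow (insert u S) w y hwn hyn k (by omega)
  have hck : c ^ k = c ^ (k - 1) * c := by rw [← pow_succ]; congr 1; omega
  have e1 : ∑ i ∈ insert u S, w i * y i = x u + ∑ j ∈ S, x j := by
    rw [Finset.sum_insert hu]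
    simp only [hw, hy, if_pos rfl]
    rw [mul_div_cancel₀ _ hc.ne']
    congr 1
    exact Finset.sum_congr rfl fun j hj => by
      simp [if_neg (fun h : j = u => hu (h ▸ hj))]
  have e2 : ∑ i ∈ insert u S, w i = c + ((k : ℝ) - 1) := by
    rw [Finset.sum_insert hu]
    simp only [hw, if_pos rfl]
    congr 1
    rw [Finset.sum_congr rfl fun j hj => if_neg (fun h : j = u => hu (h ▸ hj)),
      Finset.sum_const, hS, nsmul_eq_mul, mul_one, Nat.cast_sub (by omega)]
    norm_num
  have e3 : ∑ i ∈ insert u S, w i * y i ^ k = x u ^ k / c ^ (k - 1) + ∑ j ∈ S, x j ^ k := by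
    rw [Finset.sum_insert hu]
    simp only [hw, hy, if_pos rfl]
    congr 1
    · rw [div_pow, hck]; field_simp
    · exact Finset.sum_congr rfl fun j hj => by
        simp [if_neg (fun h : j = u => hu (h ▸ hj))]
  rw [e1, e2, e3] at h
  calc (x u + ∑ j ∈ S, x j) ^ k ≤ (c + ((k:ℝ) - 1)) ^ (k-1) * (x u ^ k / c ^ (k-1) + ∑ j ∈ S, x j ^ k) := h
    _ = (c + (k:ℝ) - 1) ^ (k-1) * (x u ^ k / c ^ (k-1) + ∑ j ∈ S, x j ^ k) := by ring_nf


/-- The incidence Q-spectral radius of the hyperstar `S_{n,k}` with `m` edges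
equals `(m^{1/(k-1)} + k - 1)^{k-1}`. -/
theorem rhoQ_hyperstar {n k m : ℕ} (hk : 2 ≤ k) (hm : 1 ≤ m)
    (u : Fin n) (V : Fin m → Finset (Fin n))
    (hcard : ∀ i, (V i).card = k - 1) (hu : ∀ i, u ∉ V i)
    (hdisj : ∀ i j, i ≠ j → Disjoint (V i) (V j))
    (E : Finset (Finset (Fin n)))
    (hE : E = Finset.image (fun i => insert u (V i)) Finset.univ) :
    rhoQ k E = ((m : ℝ) ^ (((k : ℝ) - 1)⁻¹) + (k : ℝ) - 1) ^ (k - 1) := by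
  set c : ℝ := (m : ℝ) ^ (((k : ℝ) - 1)⁻¹) with hcdef
  have hkR : (2:ℝ) ≤ (k:ℝ) := by exact_mod_cast hk
  have hm1 : (1:ℝ) ≤ (m:ℝ) := by exact_mod_cast hm
  have hmpos : (0:ℝ) < m := by linarith
  have hk1 : ((k:ℝ) - 1) = ((k - 1 : ℕ) : ℝ) := by
    rw [Nat.cast_sub (by omega)]; norm_num
  have hkne : ((k:ℝ) - 1) ≠ 0 := by nlinarith
  have hc1 : (1:ℝ) ≤ c := Real.one_le_rpow hm1 (inv_nonneg.mpr (by linarith))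
  have hc : 0 < c := lt_of_lt_of_le one_pos hc1
  have hck : c ^ (k - 1) = (m : ℝ) := by
    rw [hcdef, ← Real.rpow_natCast ((m:ℝ) ^ (((k:ℝ) - 1)⁻¹)) (k - 1),
      ← Real.rpow_mul hmpos.le, ← hk1, inv_mul_cancel₀ hkne, Real.rpow_one]
  have hck' : c ^ k = (m:ℝ) * c := by
    rw [show k = (k - 1) + 1 by omega, pow_succ, hck]
  set ρ : ℝ := (c + (k:ℝ) - 1) ^ (k - 1) with hρdef
  have hbase : 0 < c + (k:ℝ) - 1 := by linarith
  have hρpos : 0 < ρ := pow_pos hbase _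
  -- the target set
  set A : Set ℝ := {y | ∃ x : Fin n → ℝ, (∀ i, 0 ≤ x i) ∧ (∑ i, x i ^ k) = 1 ∧
    y = ∑ e ∈ E, (∑ i ∈ e, x i) ^ k} with hA
  -- sums over E
  have hinj : ∀ i ∈ (Finset.univ : Finset (Fin m)), ∀ j ∈ Finset.univ,
      insert u (V i) = insert u (V j) → i = j := by
    intro i _ j _ hij
    by_contra hne
    have hVij : V i = V j := by
      have h2 := congrArg (fun s => Finset.erase s u) hij
      simpa [Finset.erase_insert (hu i), Finset.erase_insert (hu j)] using h2
    have hd := hdisj i j hne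
    rw [hVij, disjoint_self] at hd
    have h3 := hcard j
    rw [hd] at h3
    simp only [Finset.bot_eq_empty, Finset.card_empty] at h3
    omega
  have hEsum : ∀ x : Fin n → ℝ, ∑ e ∈ E, (∑ i ∈ e, x i) ^ k
      = ∑ i : Fin m, (x u + ∑ j ∈ V i, x j) ^ k := by
    intro x
    rw [hE, Finset.sum_image hinj]
    exact Finset.sum_congr rfl fun i _ => by rw [Finset.sum_insert (hu i)]
  -- the union of the leaf sets
  set B : Finset (Fin n) := Finset.univ.biUnion V with hB
  have huB : u ∉ B := by simp [hB]; exact fun i => hu i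
  have hPD : (↑(Finset.univ : Finset (Fin m)) : Set (Fin m)).PairwiseDisjoint V :=
    fun i _ j _ hij => hdisj i j hij
  have hBcard : B.card = m * (k - 1) := by
    rw [hB, Finset.card_biUnion hPD]
    simp [hcard, Finset.sum_const]
  -- upper bound
  have hub : ∀ y ∈ A, y ≤ ρ := by
    rintro y ⟨x, hxnn, hxsum, rfl⟩
    rw [hEsum]
    have step1 : ∀ i : Fin m, (x u + ∑ j ∈ V i, x j) ^ k ≤
        ρ * (x u ^ k / c ^ (k - 1) + ∑ j ∈ V i, x j ^ k) := fun i =>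
      edge_bound hk c hc u (V i) (hu i) (hcard i) x hxnn
    calc ∑ i : Fin m, (x u + ∑ j ∈ V i, x j) ^ k
        ≤ ∑ i : Fin m, ρ * (x u ^ k / c ^ (k - 1) + ∑ j ∈ V i, x j ^ k) :=
          Finset.sum_le_sum fun i _ => step1 i
      _ = ρ * (m * (x u ^ k / c ^ (k - 1)) + ∑ i : Fin m, ∑ j ∈ V i, x j ^ k) := by
          rw [← Finset.mul_sum, Finset.sum_add_distrib, Finset.sum_const]
          simp [mul_comm]
      _ = ρ * (x u ^ k + ∑ i : Fin m, ∑ j ∈ V i, x j ^ k) := by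
          rw [hck]; field_simp
      _ ≤ ρ * 1 := by
          apply mul_le_mul_of_nonneg_left _ hρpos.le
          have h1 : x u ^ k + ∑ i : Fin m, ∑ j ∈ V i, x j ^ k
              = ∑ v ∈ insert u B, x v ^ k := by
            rw [Finset.sum_insert huB, hB, Finset.sum_biUnion hPD]
          rw [h1, ← hxsum]
          exact Finset.sum_le_sum_of_subset_of_nonneg (Finset.subset_univ _)
            (fun v _ _ => pow_nonneg (hxnn v) k)
      _ = ρ := mul_one ρ
  -- the optimal vector
  have hbpos : (0:ℝ) < (m:ℝ) * (c + (k:ℝ) - 1) := by positivity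
  set t : ℝ := ((m:ℝ) * (c + (k:ℝ) - 1)) ^ (-(k:ℝ)⁻¹) with htdef
  have ht : 0 < t := Real.rpow_pos_of_pos hbpos _
  have htk : t ^ k = ((m:ℝ) * (c + (k:ℝ) - 1))⁻¹ := by
    rw [htdef, ← Real.rpow_natCast (((m:ℝ) * (c + (k:ℝ) - 1)) ^ (-(k:ℝ)⁻¹)) k,
      ← Real.rpow_mul hbpos.le,
      show -(k:ℝ)⁻¹ * (k:ℕ) = -1 by field_simp,
      Real.rpow_neg_one]
  set a : ℝ := c * t with hadef
  set x : Fin n → ℝ := fun v => if v = u then a else if v ∈ B then t else 0 with hxdef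
  have hxnn : ∀ v, 0 ≤ x v := by
    intro v
    rw [hxdef]
    by_cases h1 : v = u
    · simp [h1]; positivity
    · by_cases h2 : v ∈ B <;> simp [h1, h2, ht.le]
  have hxsum : ∑ v, x v ^ k = 1 := by
    have hzero : ∀ v ∈ (Finset.univ : Finset (Fin n)), v ∉ insert u B → x v ^ k = 0 := by
      intro v _ hv
      simp only [Finset.mem_insert, not_or] at hv
      simp only [hxdef]
      rw [if_neg hv.1, if_neg hv.2]
      exact zero_pow (by omega)
    rw [← Finset.sum_subset (Finset.subset_univ (insert u B)) hzero,
      Finset.sum_insert huB]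
    have hxu : x u = a := by rw [hxdef]; simp
    have hxB : ∀ v ∈ B, x v ^ k = t ^ k := by
      intro v hv
      have hvne : v ≠ u := fun h => huB (h ▸ hv)
      simp only [hxdef]
      rw [if_neg hvne, if_pos hv]
    rw [hxu, Finset.sum_congr rfl hxB, Finset.sum_const, hBcard]
    have hak : a ^ k = (m:ℝ) * c * t ^ k := by rw [hadef, mul_pow, hck', mul_assoc]
    rw [hak, htk, nsmul_eq_mul]
    push_cast [Nat.cast_sub (show 1 ≤ k by omega)]
    field_simp
    ring
  have hobj : ∑ e ∈ E, (∑ i ∈ e, x i) ^ k = ρ := by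
    rw [hEsum]
    have hxu : x u = a := by rw [hxdef]; simp
    have hinner : ∀ i : Fin m, ∑ j ∈ V i, x j = ((k:ℝ) - 1) * t := by
      intro i
      have : ∀ j ∈ V i, x j = t := by
        intro j hj
        have hjB : j ∈ B := Finset.mem_biUnion.mpr ⟨i, Finset.mem_univ i, hj⟩
        have hjne : j ≠ u := fun h => hu i (h ▸ hj)
        simp only [hxdef]
        rw [if_neg hjne, if_pos hjB]
      rw [Finset.sum_congr rfl this, Finset.sum_const, hcard i, nsmul_eq_mul, hk1]
    have hterm : ∀ i : Fin m, (x u + ∑ j ∈ V i, x j) ^ k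
        = (c + (k:ℝ) - 1) ^ k * t ^ k := by
      intro i
      rw [hxu, hinner i, hadef, ← mul_pow]
      congr 1
      ring
    rw [Finset.sum_congr rfl (fun i _ => hterm i), Finset.sum_const, Finset.card_univ,
      Fintype.card_fin, nsmul_eq_mul, htk, hρdef]
    have hpow : (c + (k:ℝ) - 1) ^ k = (c + (k:ℝ) - 1) ^ (k - 1) * (c + (k:ℝ) - 1) := by
      rw [← pow_succ]; congr 1; omega
    rw [hpow]
    field_simp
  have hmem : ρ ∈ A := ⟨x, hxnn, hxsum, hobj.symm⟩
  have hbdd : BddAbove A := ⟨ρ, fun y hy => hub y hy⟩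
  show sSup A = ρ
  exact le_antisymm (csSup_le ⟨ρ, hmem⟩ hub) (le_csSup hbdd hmem)
end

section
/- The spectral radius of the adjacency tensor of the k-uniform hyperstar S_{n,k} with m = (n-1)/(k-1) edges equals m^{1/k}. -/
open Finset

private lemma rpow_pow' {x : ℝ} (hx : 0 ≤ x) (r : ℝ) (n : ℕ) :
    (x ^ r) ^ n = x ^ (r * n) := by
  rw [← Real.rpow_natCast (x ^ r) n, ← Real.rpow_mul hx]

private lemma pow_rpow' {x : ℝ} (hx : 0 ≤ x) (n : ℕ) (r : ℝ) :
    ((x ^ n : ℝ)) ^ r = x ^ ((n : ℝ) * r) := by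
  rw [← Real.rpow_natCast x n, ← Real.rpow_mul hx]

/-- The adjacency spectral radius of the hyperstar `S_{n,k}` with `m` edges
equals `m^{1/k}`. -/
theorem rhoA_hyperstar {n k m : ℕ} (hk : 2 ≤ k) (hm : 1 ≤ m)
    (u : Fin n) (V : Fin m → Finset (Fin n))
    (hcard : ∀ i, (V i).card = k - 1) (hu : ∀ i, u ∉ V i)
    (hdisj : ∀ i j, i ≠ j → Disjoint (V i) (V j))
    (E : Finset (Finset (Fin n)))
    (hE : E = Finset.image (fun i => insert u (V i)) Finset.univ) :
    rhoA k E = (m : ℝ) ^ ((k : ℝ)⁻¹) := by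
  have hk1 : 1 ≤ k := le_trans (by norm_num) hk
  have hkR : (0:ℝ) < (k:ℝ) := by exact_mod_cast Nat.lt_of_lt_of_le Nat.zero_lt_two hk
  have hkne : (k:ℝ) ≠ 0 := ne_of_gt hkR
  have hmR : (0:ℝ) < (m:ℝ) := by exact_mod_cast hm
  have hmne : (m:ℝ) ≠ 0 := ne_of_gt hmR
  set κ : ℝ := (k:ℝ)⁻¹ with hκ
  have hκk : κ * (k:ℝ) = 1 := inv_mul_cancel₀ hkne
  set t : ℝ := (m:ℝ) ^ κ with ht
  have ht0 : 0 < t := Real.rpow_pos_of_pos hmR κ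
  have hc : ((k - 1 : ℕ) : ℝ) = (k:ℝ) - 1 := by
    push_cast [Nat.cast_sub hk1]; ring
  -- edge cardinality
  have hecard : ∀ i, (insert u (V i)).card = k := by
    intro i
    rw [Finset.card_insert_of_notMem (hu i), hcard i]
    omega
  -- injectivity of the edge map
  have hinj : ∀ i ∈ (Finset.univ : Finset (Fin m)), ∀ j ∈ Finset.univ,
      insert u (V i) = insert u (V j) → i = j := by
    intro i _ j _ hij
    by_contra hne
    have hVij : V i = V j := by
      have h1 : (insert u (V i)).erase u = (insert u (V j)).erase u := by rw [hij]
      rwa [Finset.erase_insert (hu i), Finset.erase_insert (hu j)] at h1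
    have : (V i).Nonempty := Finset.card_pos.mp (by rw [hcard i]; omega)
    obtain ⟨v, hv⟩ := this
    exact (Finset.disjoint_left.mp (hdisj i j hne) hv) (hVij ▸ hv)
  have hpd : ((Finset.univ : Finset (Fin m)) : Set (Fin m)).PairwiseDisjoint V :=
    fun i _ j _ hij => hdisj i j hij
  set B : Finset (Fin n) := Finset.univ.biUnion V with hB
  have huB : u ∉ B := by
    simp only [hB, Finset.mem_biUnion]
    rintro ⟨i, -, hi⟩
    exact hu i hi
  -- sum over E as sum over Fin m
  have hsumE : ∀ x : Fin n → ℝ,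
      ∑ e ∈ E, (k : ℝ) * ∏ i ∈ e, x i
        = ∑ i : Fin m, (k:ℝ) * (x u * ∏ v ∈ V i, x v) := by
    intro x
    rw [hE, Finset.sum_image hinj]
    refine Finset.sum_congr rfl fun i _ => ?_
    rw [Finset.prod_insert (hu i)]
  -- Upper bound
  have hub : ∀ y ∈ {y | ∃ x : Fin n → ℝ, (∀ i, 0 ≤ x i) ∧ (∑ i, x i ^ k) = 1 ∧
      y = ∑ e ∈ E, (k : ℝ) * ∏ i ∈ e, x i}, y ≤ t := by
    rintro y ⟨x, hx0, hx1, rfl⟩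
    rw [hsumE x]
    -- per-edge bound
    have edge : ∀ i : Fin m, (k:ℝ) * (x u * ∏ v ∈ V i, x v)
        ≤ (t / m) * x u ^ k + t * ∑ v ∈ V i, x v ^ k := by
      intro i
      set z : Fin n → ℝ := fun j => if j = u then (t / m) * x j ^ k else t * x j ^ k with hz
      have hz0 : ∀ j ∈ insert u (V i), 0 ≤ z j := by
        intro j _
        simp only [hz]
        split
        · exact mul_nonneg (div_nonneg ht0.le hmR.le) (pow_nonneg (hx0 j) k)
        · exact mul_nonneg ht0.le (pow_nonneg (hx0 j) k)
      have key := Real.geom_mean_le_arith_mean_weighted (insert u (V i))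
        (fun _ => κ) z (fun _ _ => by positivity)
        (by rw [Finset.sum_const, hecard i, nsmul_eq_mul, mul_comm, hκk]) hz0
      -- compute the geometric side
      have hgeo : ∏ j ∈ insert u (V i), z j ^ κ = x u * ∏ v ∈ V i, x v := by
        rw [Finset.prod_insert (hu i)]
        have hzu : z u ^ κ = (t / m) ^ κ * x u := by
          simp only [hz, if_pos rfl]
          rw [Real.mul_rpow (div_nonneg ht0.le hmR.le) (pow_nonneg (hx0 u) k),
            pow_rpow' (hx0 u), mul_inv_cancel₀ hkne, Real.rpow_one]
        have hzv : ∀ v ∈ V i, z v ^ κ = t ^ κ * x v := by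
          intro v hv
          have : v ≠ u := fun h => hu i (h ▸ hv)
          simp only [hz, if_neg this]
          rw [Real.mul_rpow ht0.le (pow_nonneg (hx0 v) k),
            pow_rpow' (hx0 v), mul_inv_cancel₀ hkne, Real.rpow_one]
        rw [hzu, Finset.prod_congr rfl hzv, Finset.prod_mul_distrib,
          Finset.prod_const, hcard i]
        have hC : (t / m) ^ κ * (t ^ κ) ^ (k - 1) = 1 := by
          have h1 : t / m = (m:ℝ) ^ (κ - 1) := by
            rw [Real.rpow_sub hmR, Real.rpow_one]
          have h2 : t ^ κ = (m:ℝ) ^ (κ * κ) := by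
            rw [ht, ← Real.rpow_mul hmR.le]
          rw [h1, h2, ← Real.rpow_mul hmR.le, rpow_pow' hmR.le,
            ← Real.rpow_add hmR, hc]
          have : (κ - 1) * κ + κ * κ * ((k:ℝ) - 1) = 0 := by
            rw [hκ]
            field_simp
            ring
          rw [this, Real.rpow_zero]
        calc (t / m) ^ κ * x u * ((t ^ κ) ^ (k - 1) * ∏ v ∈ V i, x v)
            = (t / m) ^ κ * (t ^ κ) ^ (k - 1) * (x u * ∏ v ∈ V i, x v) := by ring
          _ = x u * ∏ v ∈ V i, x v := by rw [hC, one_mul]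
      -- compute the arithmetic side
      have harith : ∑ j ∈ insert u (V i), κ * z j
          = κ * ((t / m) * x u ^ k + t * ∑ v ∈ V i, x v ^ k) := by
        rw [Finset.sum_insert (hu i)]
        have hzu : z u = (t / m) * x u ^ k := by simp [hz]
        have hzv : ∀ v ∈ V i, κ * z v = κ * (t * x v ^ k) := by
          intro v hv
          have : v ≠ u := fun h => hu i (h ▸ hv)
          simp [hz, this]
        rw [hzu, Finset.sum_congr rfl hzv, ← Finset.mul_sum, ← Finset.mul_sum]
        ring
      rw [hgeo, harith] at key
      calc (k:ℝ) * (x u * ∏ v ∈ V i, x v)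
          ≤ (k:ℝ) * (κ * ((t / m) * x u ^ k + t * ∑ v ∈ V i, x v ^ k)) :=
            mul_le_mul_of_nonneg_left key hkR.le
        _ = (t / m) * x u ^ k + t * ∑ v ∈ V i, x v ^ k := by
            rw [← mul_assoc, mul_comm (k:ℝ) κ, hκk, one_mul]
    calc ∑ i : Fin m, (k:ℝ) * (x u * ∏ v ∈ V i, x v)
        ≤ ∑ i : Fin m, ((t / m) * x u ^ k + t * ∑ v ∈ V i, x v ^ k) :=
          Finset.sum_le_sum fun i _ => edge i
      _ = (m:ℝ) * ((t / m) * x u ^ k) + t * ∑ v ∈ B, x v ^ k := by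
          rw [Finset.sum_add_distrib, Finset.sum_const, Finset.card_univ,
            Fintype.card_fin, nsmul_eq_mul, ← Finset.mul_sum, hB,
            Finset.sum_biUnion hpd]
      _ = t * ∑ v ∈ insert u B, x v ^ k := by
          rw [Finset.sum_insert huB]
          field_simp
      _ ≤ t * ∑ v, x v ^ k := by
          refine mul_le_mul_of_nonneg_left ?_ ht0.le
          exact Finset.sum_le_sum_of_subset_of_nonneg (Finset.subset_univ _)
            (fun j _ _ => pow_nonneg (hx0 j) k)
      _ = t := by rw [hx1, mul_one]
  -- The optimizer
  set a : ℝ := (k:ℝ) ^ (-κ) with ha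
  set b : ℝ := ((m:ℝ) * (k:ℝ)) ^ (-κ) with hb
  have ha0 : 0 < a := Real.rpow_pos_of_pos hkR _
  have hb0 : 0 < b := Real.rpow_pos_of_pos (by positivity) _
  have hak : a ^ k = ((k:ℝ))⁻¹ := by
    rw [ha, rpow_pow' hkR.le, neg_mul, hκk, Real.rpow_neg_one]
  have hbk : b ^ k = ((m:ℝ) * (k:ℝ))⁻¹ := by
    rw [hb, rpow_pow' (mul_nonneg hmR.le hkR.le), neg_mul, hκk, Real.rpow_neg_one]
  classical
  set xs : Fin n → ℝ := fun j => if j = u then a else if j ∈ B then b else 0 with hxs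
  have hxs0 : ∀ j, 0 ≤ xs j := by
    intro j
    simp only [hxs]
    split
    · exact ha0.le
    · split
      · exact hb0.le
      · exact le_rfl
  have hxsu : xs u = a := by simp [hxs]
  have hxsv : ∀ v ∈ B, xs v = b := by
    intro v hv
    have hvu : v ≠ u := by
      rintro rfl
      exact huB hv
    simp [hxs, hvu, hv]
  have hcardB : B.card = m * (k - 1) := by
    rw [hB, Finset.card_biUnion (fun i _ j _ hij => hdisj i j hij)]
    simp [hcard, Finset.sum_const, Finset.card_univ]
  have hxs1 : (∑ j, xs j ^ k) = 1 := by
    have hz : ∀ j ∈ (Finset.univ : Finset (Fin n)), j ∉ insert u B → xs j ^ k = 0 := by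
      intro j _ hj
      simp only [Finset.mem_insert, not_or] at hj
      simp only [hxs, if_neg hj.1, if_neg hj.2]
      exact zero_pow (by omega)
    rw [← Finset.sum_subset (Finset.subset_univ (insert u B)) hz,
      Finset.sum_insert huB, hxsu, hak,
      Finset.sum_congr rfl (fun v hv => by rw [hxsv v hv]),
      Finset.sum_const, hcardB, nsmul_eq_mul, hbk]
    push_cast [Nat.cast_sub hk1]
    field_simp
    ring
  -- value of the optimizer
  have hprod : ∀ i : Fin m, ∏ v ∈ V i, xs v = b ^ (k - 1) := by
    intro i
    rw [Finset.prod_congr rfl (fun v hv => hxsv v (Finset.mem_biUnion.mpr ⟨i, Finset.mem_univ i, hv⟩)),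
      Finset.prod_const, hcard i]
  have e1 : b ^ (k - 1) = (m:ℝ) ^ (-κ * ((k:ℝ) - 1)) * (k:ℝ) ^ (-κ * ((k:ℝ) - 1)) := by
    rw [hb, rpow_pow' (mul_nonneg hmR.le hkR.le), hc, Real.mul_rpow hmR.le hkR.le]
  have hexp1 : (1:ℝ) + -κ * ((k:ℝ) - 1) = κ := by
    rw [hκ]
    field_simp
    ring
  have hexp2 : (1:ℝ) + (-κ + -κ * ((k:ℝ) - 1)) = 0 := by
    rw [hκ]
    field_simp
    ring
  have hval : ∑ e ∈ E, (k : ℝ) * ∏ i ∈ e, xs i = t := by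
    rw [hsumE xs, Finset.sum_congr rfl (fun i _ => by rw [hprod i, hxsu]),
      Finset.sum_const, Finset.card_univ, Fintype.card_fin, nsmul_eq_mul]
    calc (m:ℝ) * ((k:ℝ) * (a * b ^ (k - 1)))
        = ((m:ℝ) * (m:ℝ) ^ (-κ * ((k:ℝ) - 1))) * ((k:ℝ) * ((k:ℝ) ^ (-κ) * (k:ℝ) ^ (-κ * ((k:ℝ) - 1)))) := by
          rw [ha, e1]; ring
      _ = (m:ℝ) ^ ((1:ℝ) + -κ * ((k:ℝ) - 1)) * (k:ℝ) ^ ((1:ℝ) + (-κ + -κ * ((k:ℝ) - 1))) := by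
          rw [Real.rpow_add hmR, Real.rpow_add hkR, Real.rpow_add hkR, Real.rpow_one,
            Real.rpow_one]
      _ = t := by rw [hexp1, hexp2, Real.rpow_zero, mul_one]
  have hmem : t ∈ {y | ∃ x : Fin n → ℝ, (∀ i, 0 ≤ x i) ∧ (∑ i, x i ^ k) = 1 ∧
      y = ∑ e ∈ E, (k : ℝ) * ∏ i ∈ e, x i} := ⟨xs, hxs0, hxs1, hval.symm⟩
  unfold rhoA
  exact le_antisymm (csSup_le ⟨t, hmem⟩ hub) (le_csSup ⟨t, hub⟩ hmem)
end

section
/- Every k-uniform supertree T on n vertices with m = (n-1)/(k-1) edges satisfies ρ(A(T)) ≤ m^{1/k}, with equality if and only if T is the hyperstar S_{n,k}. -/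
set_option maxHeartbeats 1000000


/-- `E` is the edge set of the hyperstar `S_{n,k}`: `m` edges, each the union
of a common center `u` and one block of a partition of the remaining vertices
into `(k-1)`-sets. -/
def IsHyperstar {n : ℕ} (k : ℕ) (E : Finset (Finset (Fin n))) : Prop :=
  ∃ (m : ℕ) (u : Fin n) (V : Fin m → Finset (Fin n)),
    (∀ i, (V i).card = k - 1) ∧ (∀ i, u ∉ V i) ∧
    (∀ i j, i ≠ j → Disjoint (V i) (V j)) ∧
    E = Finset.image (fun i => insert u (V i)) Finset.univ ∧
    insert u (Finset.univ.biUnion V) = Finset.univ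

open Finset

namespace SuperTreeAux

variable {n k : ℕ}

private def IncR (E : Finset (Finset (Fin n))) :
    (Fin n ⊕ {e // e ∈ E}) → (Fin n ⊕ {e // e ∈ E}) → Prop :=
  fun a b => ∃ (v : Fin n) (e : {e // e ∈ E}), a = Sum.inl v ∧ b = Sum.inr e ∧ v ∈ e.1

private def IncG (E : Finset (Finset (Fin n))) : SimpleGraph (Fin n ⊕ {e // e ∈ E}) :=
  SimpleGraph.fromRel (IncR E)

private lemma adj_inl_inr {E : Finset (Finset (Fin n))} {v : Fin n} {e : {e // e ∈ E}} :
    (IncG E).Adj (Sum.inl v) (Sum.inr e) ↔ v ∈ e.1 := by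
  simp only [IncG, SimpleGraph.fromRel_adj, IncR]
  constructor
  · rintro ⟨-, h | h⟩
    · obtain ⟨v', e', hv, he, hm⟩ := h
      cases hv; cases he; exact hm
    · obtain ⟨v', e', hv, he, hm⟩ := h
      exact absurd hv (by simp)
  · intro h
    exact ⟨by simp, Or.inl ⟨v, e, rfl, rfl, h⟩⟩

private lemma adj_inr_inl {E : Finset (Finset (Fin n))} {v : Fin n} {e : {e // e ∈ E}} :
    (IncG E).Adj (Sum.inr e) (Sum.inl v) ↔ v ∈ e.1 := by
  rw [SimpleGraph.adj_comm]; exact adj_inl_inr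

private lemma not_adj_inl_inl {E : Finset (Finset (Fin n))} {v w : Fin n} :
    ¬ (IncG E).Adj (Sum.inl v) (Sum.inl w) := by
  simp only [IncG, SimpleGraph.fromRel_adj, IncR]
  rintro ⟨-, h | h⟩ <;> obtain ⟨v', e', hv, he, -⟩ := h <;> simp at he hv

private lemma not_adj_inr_inr {E : Finset (Finset (Fin n))} {e f : {e // e ∈ E}} :
    ¬ (IncG E).Adj (Sum.inr e) (Sum.inr f) := by
  simp only [IncG, SimpleGraph.fromRel_adj, IncR]
  rintro ⟨-, h | h⟩ <;> obtain ⟨v', e', hv, he, -⟩ := h <;> simp at he hv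

private def Ok (E : Finset (Finset (Fin n))) : Fin n → Fin n → List (Fin n × {e // e ∈ E}) → Prop
  | a, b, [] => a = b
  | a, b, p :: l => a ∈ p.2.1 ∧ p.1 ∈ p.2.1 ∧ Ok E p.1 b l

private lemma parse (E : Finset (Finset (Fin n))) (L : ℕ) :
    ∀ (a b : Fin n) (w : (IncG E).Walk (Sum.inl a) (Sum.inl b)), w.length ≤ L →
    ∃ l : List (Fin n × {e // e ∈ E}), Ok E a b l ∧
      w.support = Sum.inl a :: l.flatMap (fun p => [Sum.inr p.2, Sum.inl p.1]) := by
  induction L using Nat.strong_induction_on with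
  | _ L ih =>
    intro a b w hw
    cases w with
    | nil => exact ⟨[], rfl, by simp⟩
    | cons h w' =>
      rename_i u
      cases u with
      | inl v => exact absurd h not_adj_inl_inl
      | inr e =>
        have hae : a ∈ e.1 := adj_inl_inr.1 h
        cases w' with
        | cons h' w'' =>
          rename_i u'
          cases u' with
          | inr f => exact absurd h' not_adj_inr_inr
          | inl v =>
            have hve : v ∈ e.1 := adj_inr_inl.1 h'
            have hlen : w''.length < L := by
              simp only [SimpleGraph.Walk.length_cons] at hw
              omega
            obtain ⟨l'', hok, hsup⟩ := ih w''.length hlen v b w'' le_rfl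
            refine ⟨(v, e) :: l'', ⟨hae, hve, hok⟩, ?_⟩
            simp only [SimpleGraph.Walk.support_cons, hsup, List.flatMap_cons]
            rfl

private lemma ok_get (E : Finset (Finset (Fin n))) :
    ∀ (l : List (Fin n × {e // e ∈ E})) (a b : Fin n), Ok E a b l →
    ∀ (i : ℕ) (h : i < l.length),
      (a :: l.map Prod.fst)[i]'(by simp; omega) ∈ (l[i]'h).2.1 ∧
      (l.map Prod.fst)[i]'(by simp [h]) ∈ (l[i]'h).2.1 := by
  intro l
  induction l with
  | nil => intro a b _ i h; simp at h
  | cons p t iht =>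
    intro a b hok i h
    obtain ⟨h1, h2, h3⟩ := hok
    cases i with
    | zero => simpa using ⟨h1, h2⟩
    | succ j =>
      have hj : j < t.length := by simp at h; omega
      have := iht p.1 b h3 j hj
      simpa using this

private lemma ok_last (E : Finset (Finset (Fin n))) :
    ∀ (l : List (Fin n × {e // e ∈ E})) (a b : Fin n), Ok E a b l →
    ∀ h : l ≠ [], (l.getLast h).1 = b ∧ b ∈ (l.getLast h).2.1 := by
  intro l
  induction l with
  | nil => intro a b _ h; exact absurd rfl h
  | cons p t iht =>
    intro a b hok h
    obtain ⟨h1, h2, h3⟩ := hok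
    cases t with
    | nil =>
      cases h3
      exact ⟨rfl, h2⟩
    | cons q t' =>
      have := iht p.1 b h3 (by simp)
      simpa [List.getLast_cons] using this

private lemma flatMap_len (l : List (Fin n × {e // e ∈ (E : Finset (Finset (Fin n)))})) :
    (l.flatMap (fun p => [(Sum.inr p.2 : Fin n ⊕ {e // e ∈ E}), Sum.inl p.1])).length
      = 2 * l.length := by
  induction l with
  | nil => simp
  | cons p t ih => simp [List.flatMap_cons, ih]; omega

private lemma subl_inr (l : List (Fin n × {e // e ∈ (E : Finset (Finset (Fin n)))})) :
    (l.map fun p => (Sum.inr p.2 : Fin n ⊕ {e // e ∈ E})).Sublist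
      (l.flatMap (fun p => [(Sum.inr p.2 : Fin n ⊕ {e // e ∈ E}), Sum.inl p.1])) := by
  induction l with
  | nil => simp
  | cons p t ih =>
    simp only [List.map_cons, List.flatMap_cons]
    exact List.Sublist.cons₂ _ (List.Sublist.cons _ ih)

private lemma subl_inl (l : List (Fin n × {e // e ∈ (E : Finset (Finset (Fin n)))})) :
    (l.map fun p => (Sum.inl p.1 : Fin n ⊕ {e // e ∈ E})).Sublist
      (l.flatMap (fun p => [(Sum.inr p.2 : Fin n ⊕ {e // e ∈ E}), Sum.inl p.1])) := by
  induction l with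
  | nil => simp
  | cons p t ih =>
    simp only [List.map_cons, List.flatMap_cons]
    exact List.Sublist.cons _ (List.Sublist.cons₂ _ ih)

private lemma no_inl_cycle {E : Finset (Finset (Fin n))} (hacyc : ¬ HasBergeCycle E)
    (a : Fin n) (p : (IncG E).Walk (Sum.inl a) (Sum.inl a)) : ¬ p.IsCycle := by
  intro hp
  obtain ⟨l, hok, hsup⟩ := parse E p.length a a p le_rfl
  apply hacyc
  have hnd : (l.flatMap (fun p => [(Sum.inr p.2 : Fin n ⊕ {e // e ∈ E}), Sum.inl p.1])).Nodup := by
    have h := hp.support_nodup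
    rw [hsup] at h
    simpa using h
  set q : ℕ := l.length with hq
  have hlen : p.length = 2 * q := by
    have h1 : p.support.length = p.length + 1 := SimpleGraph.Walk.length_support p
    rw [hsup] at h1
    simp only [List.length_cons, flatMap_len] at h1
    omega
  have hq2 : 2 ≤ q := by
    have := hp.three_le_length
    omega
  have hlne : l ≠ [] := by
    intro h; rw [h] at hq; simp at hq; omega
  have hndE : (l.map Prod.snd).Nodup := by
    have h1 : ((l.map Prod.snd).map (Sum.inr : {e // e ∈ E} → Fin n ⊕ {e // e ∈ E})).Nodup := by
      rw [List.map_map]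
      exact (subl_inr l).nodup hnd
    exact h1.of_map _
  have hndV : (l.map Prod.fst).Nodup := by
    have h1 : ((l.map Prod.fst).map (Sum.inl : Fin n → Fin n ⊕ {e // e ∈ E})).Nodup := by
      rw [List.map_map]
      exact (subl_inl l).nodup hnd
    exact h1.of_map _
  set M : List (Fin n) := l.map Prod.fst with hM
  have hMlen : M.length = q := by simp [hM, hq]
  have hMinj : ∀ (i j : ℕ) (hi : i < q) (hj : j < q),
      M[i]'(by omega) = M[j]'(by omega) → i = j := by
    intro i j hi hj h
    have hinj := List.nodup_iff_injective_get.1 hndV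
    have h2 : M.get ⟨i, by omega⟩ = M.get ⟨j, by omega⟩ := by
      simp only [List.get_eq_getElem]; exact h
    have := hinj h2
    simpa using congrArg Fin.val this
  have hlast := ok_last E l a a hok hlne
  have hgl : l.getLast hlne = l[q-1]'(by omega) := List.getLast_eq_getElem hlne
  have hMlast : M[q-1]'(by omega) = a := by
    have h2 : M[q-1]'(by omega) = (l[q-1]'(by omega)).1 := by simp [hM]
    rw [h2, ← hgl, hlast.1]
  have haLast : a ∈ (l[q-1]'(by omega)).2.1 := by
    rw [← hgl]; exact hlast.2
  -- the Berge cycle data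
  set vv : Fin q → Fin n := fun r =>
    if h : r.1 = 0 then a else M[r.1 - 1]'(by have := r.2; omega) with hvv
  set ff : Fin q → Finset (Fin n) := fun r => ((l[r.1]'(by have := r.2; omega)).2 : {e // e ∈ E}).1
    with hff
  have hvv0 : ∀ (r : Fin q), r.1 = 0 → vv r = a := by
    intro r hr; simp [hvv, hr]
  have hvvS : ∀ (r : Fin q) (hr : r.1 ≠ 0), vv r = M[r.1 - 1]'(by have := r.2; omega) := by
    intro r hr; simp [hvv, hr]
  have hvinj : Function.Injective vv := by
    intro r r' hrr
    by_cases h0 : r.1 = 0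
    · by_cases h0' : r'.1 = 0
      · exact Fin.ext (by omega)
      · exfalso
        rw [hvv0 r h0, hvvS r' h0'] at hrr
        have := hMinj (q-1) (r'.1 - 1) (by omega) (by have := r'.2; omega)
          (by rw [hMlast]; exact hrr)
        have := r'.2
        omega
    · by_cases h0' : r'.1 = 0
      · exfalso
        rw [hvvS r h0, hvv0 r' h0'] at hrr
        have := hMinj (r.1 - 1) (q-1) (by have := r.2; omega) (by omega)
          (by rw [hMlast]; exact hrr)
        have := r.2
        omega
      · rw [hvvS r h0, hvvS r' h0'] at hrr
        have := hMinj (r.1 - 1) (r'.1 - 1) (by have := r.2; omega)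
          (by have := r'.2; omega) hrr
        exact Fin.ext (by omega)
  have hfinj : Function.Injective ff := by
    intro r r' hrr
    have hinj := List.nodup_iff_injective_get.1 hndE
    have h2 : (l.map Prod.snd).get ⟨r.1, by rw [List.length_map, ← hq]; exact r.2⟩
        = (l.map Prod.snd).get ⟨r'.1, by rw [List.length_map, ← hq]; exact r'.2⟩ := by
      simp only [List.get_eq_getElem, List.getElem_map]
      exact Subtype.ext hrr
    have := hinj h2
    exact Fin.ext (by simpa using congrArg Fin.val this)
  refine ⟨q, hq2, vv, ff, hvinj, hfinj, fun r => (l[r.1]'(by have := r.2; omega)).2.2, fun r => ⟨?_, ?_⟩⟩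
  · -- vv r ∈ ff r
    have hg := (ok_get E l a a hok r.1 (by have := r.2; omega)).1
    by_cases h0 : r.1 = 0
    · rw [hvv0 r h0]
      have : (a :: l.map Prod.fst)[r.1]'(by simp; have := r.2; omega) = a := by
        simp [h0]
      rwa [this] at hg
    · rw [hvvS r h0]
      obtain ⟨i, hi⟩ : ∃ i, r.1 = i + 1 := ⟨r.1 - 1, by omega⟩
      have : (a :: l.map Prod.fst)[r.1]'(by simp; have := r.2; omega)
          = M[r.1 - 1]'(by have := r.2; omega) := by
        simp only [hM]
        simp [hi]
      rwa [this] at hg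
  · -- vv ((r+1) % q) ∈ ff r
    by_cases hlt : r.1 + 1 < q
    · have hmod : (r.1 + 1) % q = r.1 + 1 := Nat.mod_eq_of_lt hlt
      have hne0 : ((⟨(r.1 + 1) % q, Nat.mod_lt _ (by omega)⟩ : Fin q)).1 ≠ 0 := by
        simp only [hmod]; omega
      rw [hvvS _ hne0]
      have hg := (ok_get E l a a hok r.1 (by have := r.2; omega)).2
      have : M[((⟨(r.1 + 1) % q, Nat.mod_lt _ (by omega)⟩ : Fin q)).1 - 1]'(by
          have := Nat.mod_lt (r.1+1) (show 0 < q by omega); omega)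
          = (l.map Prod.fst)[r.1]'(by rw [List.length_map, ← hq]; exact r.2) := by
        simp only [hmod, Nat.add_sub_cancel]; rfl
      rw [this]
      exact hg
    · have hreq : r.1 + 1 = q := by have := r.2; omega
      have hmod : (r.1 + 1) % q = 0 := by rw [hreq]; exact Nat.mod_self q
      have h0 : ((⟨(r.1 + 1) % q, Nat.mod_lt _ (by omega)⟩ : Fin q)).1 = 0 := hmod
      rw [hvv0 _ h0]
      have : r.1 = q - 1 := by omega
      have hfr : ff r = (l[q-1]'(by omega)).2.1 := by
        simp only [hff, this]
      rw [hfr]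
      exact haLast

private lemma isAcyclic {E : Finset (Finset (Fin n))} (hacyc : ¬ HasBergeCycle E) :
    (IncG E).IsAcyclic := by
  intro u p hp
  cases u with
  | inl a => exact no_inl_cycle hacyc a p hp
  | inr e =>
    cases p with
    | nil => exact hp.ne_nil rfl
    | cons h w' =>
      rename_i u'
      cases u' with
      | inr f => exact absurd h not_adj_inr_inr
      | inl v =>
        have hmem : (Sum.inl v : Fin n ⊕ {e // e ∈ E}) ∈ (SimpleGraph.Walk.cons h w').support := by
          rw [SimpleGraph.Walk.support_cons]
          exact List.mem_cons_of_mem _ w'.start_mem_support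
        exact no_inl_cycle hacyc v _ (hp.rotate hmem)


private lemma reach_of_chain (E : Finset (Finset (Fin n))) :
    ∀ (q : ℕ) (vs : Fin (q+1) → Fin n) (fs : Fin q → Finset (Fin n)),
    (∀ r, fs r ∈ E) → (∀ r : Fin q, vs r.castSucc ∈ fs r ∧ vs r.succ ∈ fs r) →
    (IncG E).Reachable (Sum.inl (vs 0)) (Sum.inl (vs (Fin.last q))) := by
  intro q
  induction q with
  | zero => intro vs fs _ _; rfl
  | succ q ih =>
    intro vs fs hfE hcond
    have h1 := ih (vs ∘ Fin.castSucc) (fs ∘ Fin.castSucc) (fun r => hfE _) (fun r => by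
      have h := hcond r.castSucc
      constructor
      · have : (Fin.castSucc r).castSucc = Fin.castSucc (Fin.castSucc r) := rfl
        exact h.1
      · have h2 : (vs ∘ Fin.castSucc) r.succ = vs (Fin.castSucc r).succ := by
          simp only [Function.comp_apply, Fin.succ_castSucc]
        rw [h2]
        exact h.2)
    have h2 : (vs ∘ Fin.castSucc) 0 = vs 0 := by simp
    have h3 : (vs ∘ Fin.castSucc) (Fin.last q) = vs (Fin.castSucc (Fin.last q)) := rfl
    rw [h2, h3] at h1
    apply h1.trans
    have hc := hcond (Fin.last q)
    have e : {e // e ∈ E} := ⟨fs (Fin.last q), hfE _⟩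
    have ha1 : (IncG E).Adj (Sum.inl (vs (Fin.castSucc (Fin.last q))))
        (Sum.inr (⟨fs (Fin.last q), hfE _⟩ : {e // e ∈ E})) := adj_inl_inr.2 hc.1
    have ha2 : (IncG E).Adj (Sum.inr (⟨fs (Fin.last q), hfE _⟩ : {e // e ∈ E}))
        (Sum.inl (vs (Fin.last (q+1)))) := by
      apply adj_inr_inl.2
      have : (Fin.last q).succ = Fin.last (q+1) := Fin.succ_last q
      rw [← this]
      exact hc.2
    exact ha1.reachable.trans ha2.reachable

private lemma vertex_in_edge {E : Finset (Finset (Fin n))} (hn : 2 ≤ n)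
    (hconn : HConnected E) : ∀ v : Fin n, ∃ e ∈ E, v ∈ e := by
  intro v
  have : Nontrivial (Fin n) := Fin.nontrivial_iff_two_le.2 hn
  obtain ⟨w, hw⟩ := exists_ne v
  obtain ⟨q, vs, fs, ⟨-, -, hfE, hcond⟩, h0, hlast⟩ := hconn v w (Ne.symm hw)
  cases q with
  | zero =>
    exfalso
    apply hw
    rw [← h0, ← hlast]
    rfl
  | succ q =>
    refine ⟨fs 0, hfE 0, ?_⟩
    have := (hcond 0).1
    rw [show (0 : Fin (q+1)).castSucc = 0 from rfl, h0] at this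
    exact this

private lemma inc_connected {E : Finset (Finset (Fin n))} (hk : 2 ≤ k) (hn : 2 ≤ n)
    (hunif : ∀ e ∈ E, e.card = k) (hconn : HConnected E) : (IncG E).Connected := by
  have hreach_inl : ∀ u : Fin n ⊕ {e // e ∈ E}, ∃ a : Fin n, (IncG E).Reachable u (Sum.inl a) := by
    intro u
    cases u with
    | inl a => exact ⟨a, by rfl⟩
    | inr e =>
      have hne : e.1.Nonempty := by
        rw [← Finset.card_pos, hunif e.1 e.2]
        omega
      obtain ⟨v, hv⟩ := hne
      exact ⟨v, (adj_inr_inl.2 hv).reachable⟩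
  have hll : ∀ a b : Fin n, (IncG E).Reachable (Sum.inl a) (Sum.inl b) := by
    intro a b
    rcases eq_or_ne a b with rfl | hab
    · rfl
    · obtain ⟨q, vs, fs, ⟨-, -, hfE, hcond⟩, h0, hlast⟩ := hconn a b hab
      have := reach_of_chain E q vs fs hfE hcond
      rwa [h0, hlast] at this
  rw [SimpleGraph.connected_iff]
  refine ⟨?_, ⟨Sum.inl ⟨0, by omega⟩⟩⟩
  intro u w
  obtain ⟨a, ha⟩ := hreach_inl u
  obtain ⟨b, hb⟩ := hreach_inl w
  exact (ha.trans (hll a b)).trans hb.symm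

private lemma edge_count {E : Finset (Finset (Fin n))} (hk : 2 ≤ k) (hn : 2 ≤ n)
    (hunif : ∀ e ∈ E, e.card = k) (hconn : HConnected E) (hacyc : ¬ HasBergeCycle E) :
    E.card * k + 1 = n + E.card := by
  classical
  letI : DecidableRel (IncG E).Adj := Classical.decRel _
  have htree : (IncG E).IsTree := ⟨inc_connected hk hn hunif hconn, isAcyclic hacyc⟩
  have hcard := htree.card_edgeFinset
  have hV : Fintype.card (Fin n ⊕ {e // e ∈ E}) = n + E.card := by
    simp [Fintype.card_sum]
  -- degrees
  have hdegr : ∀ e : {e // e ∈ E}, (IncG E).degree (Sum.inr e) = k := by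
    intro e
    have hnb : (IncG E).neighborFinset (Sum.inr e) = e.1.image Sum.inl := by
      ext u
      rw [SimpleGraph.mem_neighborFinset]
      cases u with
      | inl v => simp [adj_inr_inl]
      | inr f => simp [not_adj_inr_inr]
    rw [SimpleGraph.degree, hnb, Finset.card_image_of_injective _ Sum.inl_injective,
      hunif e.1 e.2]
  have hdegl : ∀ v : Fin n,
      (IncG E).degree (Sum.inl v) = (Finset.univ.filter fun e : {e // e ∈ E} => v ∈ e.1).card := by
    intro v
    have hnb : (IncG E).neighborFinset (Sum.inl v)
        = (Finset.univ.filter fun e : {e // e ∈ E} => v ∈ e.1).image Sum.inr := by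
      ext u
      rw [SimpleGraph.mem_neighborFinset]
      cases u with
      | inl w => simp [not_adj_inl_inl]
      | inr f => simp [adj_inl_inr]
    rw [SimpleGraph.degree, hnb, Finset.card_image_of_injective _ Sum.inr_injective]
  have hsum := SimpleGraph.sum_degrees_eq_twice_card_edges (IncG E)
  rw [Fintype.sum_sum_type] at hsum
  have h1 : ∑ e : {e // e ∈ E}, (IncG E).degree (Sum.inr e) = E.card * k := by
    rw [Finset.sum_congr rfl (fun e _ => hdegr e), Finset.sum_const, Finset.card_univ, Fintype.card_coe,
      smul_eq_mul]
  have h2 : ∑ v : Fin n, (IncG E).degree (Sum.inl v) = E.card * k := by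
    rw [Finset.sum_congr rfl (fun v _ => hdegl v)]
    have h3 : ∀ v : Fin n, (Finset.univ.filter fun e : {e // e ∈ E} => v ∈ e.1).card
        = ∑ e : {e // e ∈ E}, if v ∈ e.1 then 1 else 0 := by
      intro v
      rw [Finset.card_filter]
    rw [Finset.sum_congr rfl (fun v _ => h3 v), Finset.sum_comm]
    have h4 : ∀ e : {e // e ∈ E}, ∑ v : Fin n, (if v ∈ e.1 then 1 else 0) = k := by
      intro e
      rw [Finset.sum_ite_mem]
      simp [Finset.univ_inter, hunif e.1 e.2]
    rw [Finset.sum_congr rfl (fun e _ => h4 e), Finset.sum_const, Finset.card_univ, Fintype.card_coe,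
      smul_eq_mul]
  rw [h1, h2] at hsum
  have hEF : (IncG E).edgeFinset.card = E.card * k := by omega
  rw [hEF, hV] at hcard
  exact hcard


private def BPath (E : Finset (Finset (Fin n))) (c v : Fin n) (q : ℕ) : Prop :=
  ∃ (vs : Fin (q+1) → Fin n) (fs : Fin q → Finset (Fin n)),
    IsBergePath E vs fs ∧ vs 0 = c ∧ vs (Fin.last q) = v

private noncomputable def hdist (E : Finset (Finset (Fin n))) (c v : Fin n) : ℕ :=
  sInf {q | BPath E c v q}

private noncomputable def hpar (E : Finset (Finset (Fin n))) (c : Fin n)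
    (e : Finset (Fin n)) : Fin n :=
  if c ∈ e then c else
    if hne : e.Nonempty then (Finset.exists_min_image e (hdist E c) hne).choose else c

private lemma hpar_c {E : Finset (Finset (Fin n))} {c : Fin n} {e : Finset (Fin n)}
    (hc : c ∈ e) : hpar E c e = c := by
  simp [hpar, hc]

private lemma hpar_mem {E : Finset (Finset (Fin n))} {c : Fin n} {e : Finset (Fin n)}
    (hne : e.Nonempty) : hpar E c e ∈ e := by
  unfold hpar
  by_cases hc : c ∈ e
  · simpa [hc]
  · simp only [hc, if_false, hne, dif_pos]
    exact (Finset.exists_min_image e (hdist E c) hne).choose_spec.1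

private lemma hpar_min {E : Finset (Finset (Fin n))} {c : Fin n} {e : Finset (Fin n)}
    (hc : c ∉ e) (hne : e.Nonempty) :
    ∀ w ∈ e, hdist E c (hpar E c e) ≤ hdist E c w := by
  intro w hw
  have h := (Finset.exists_min_image e (hdist E c) hne).choose_spec.2 w hw
  unfold hpar
  simp only [hc, if_false, hne, dif_pos]
  exact h

private lemma bpath_prefix {E : Finset (Finset (Fin n))} {c v : Fin n} {q : ℕ}
    (h : BPath E c v (q+1)) :
    ∃ u f, f ∈ E ∧ v ∈ f ∧ u ∈ f ∧ BPath E c u q := by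
  obtain ⟨vs, fs, ⟨hvinj, hfinj, hfE, hcond⟩, h0, hlast⟩ := h
  refine ⟨vs (Fin.castSucc (Fin.last q)), fs (Fin.last q), hfE _, ?_, (hcond (Fin.last q)).1, ?_⟩
  · rw [← hlast, ← Fin.succ_last]
    exact (hcond (Fin.last q)).2
  · refine ⟨vs ∘ Fin.castSucc, fs ∘ Fin.castSucc,
      ⟨hvinj.comp (Fin.castSucc_injective _), hfinj.comp (Fin.castSucc_injective _),
        fun r => hfE _, fun r => ?_⟩, ?_, rfl⟩
    · constructor
      · exact (hcond r.castSucc).1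
      · have h2 : (vs ∘ Fin.castSucc) r.succ = vs (Fin.castSucc r).succ := by
          simp only [Function.comp_apply, Fin.succ_castSucc]
        rw [h2]
        exact (hcond r.castSucc).2
    · simpa using h0

private lemma cover {E : Finset (Finset (Fin n))} (hconn : HConnected E) {c v : Fin n}
    (hvc : v ≠ c) : ∃ e ∈ E, v ∈ e ∧ hpar E c e ≠ v := by
  have hne : {q | BPath E c v q}.Nonempty := by
    obtain ⟨q, vs, fs, hb, h0, hlast⟩ := hconn c v (Ne.symm hvc)
    exact ⟨q, vs, fs, hb, h0, hlast⟩
  have hbp : BPath E c v (hdist E c v) := Nat.sInf_mem hne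
  cases hq : hdist E c v with
  | zero =>
    exfalso
    rw [hq] at hbp
    obtain ⟨vs, fs, -, h0, hlast⟩ := hbp
    exact hvc (by rw [← hlast, ← h0]; rfl)
  | succ q =>
    rw [hq] at hbp
    obtain ⟨u, f, hfE, hvf, huf, hbu⟩ := bpath_prefix hbp
    by_cases hcf : c ∈ f
    · exact ⟨f, hfE, hvf, by rw [hpar_c hcf]; exact Ne.symm hvc⟩
    · refine ⟨f, hfE, hvf, fun hpv => ?_⟩
      have h1 : hdist E c (hpar E c f) ≤ hdist E c u := hpar_min hcf ⟨v, hvf⟩ u huf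
      have h2 : hdist E c u ≤ q := Nat.sInf_le hbu
      rw [hpv] at h1
      omega

private lemma exists_parent {E : Finset (Finset (Fin n))} (hk : 2 ≤ k) (hn : 2 ≤ n)
    (hunif : ∀ e ∈ E, e.card = k) (hconn : HConnected E) (hacyc : ¬ HasBergeCycle E)
    (c : Fin n) :
    ∃ par : Finset (Fin n) → Fin n, (∀ e ∈ E, par e ∈ e) ∧
      (E : Set (Finset (Fin n))).PairwiseDisjoint (fun e => e.erase (par e)) ∧
      E.biUnion (fun e => e.erase (par e)) = Finset.univ.erase c := by
  classical
  have hEne : ∀ e ∈ E, e.Nonempty := by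
    intro e he
    rw [← Finset.card_pos, hunif e he]
    omega
  refine ⟨hpar E c, fun e he => hpar_mem (hEne e he), ?_, ?_⟩
  all_goals
    have hsub : ∀ e ∈ E, e.erase (hpar E c e) ⊆ Finset.univ.erase c := by
      intro e he i hi
      rw [Finset.mem_erase]
      refine ⟨fun hic => ?_, Finset.mem_univ _⟩
      subst hic
      exact Finset.ne_of_mem_erase hi (hpar_c (Finset.mem_of_mem_erase hi)).symm
    have hUeq : E.biUnion (fun e => e.erase (hpar E c e)) = Finset.univ.erase c := by
      apply subset_antisymm
      · exact Finset.biUnion_subset.2 hsub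
      · intro v hv
        obtain ⟨e, he, hve, hpv⟩ := cover hconn (Finset.mem_erase.1 hv).1
        exact Finset.mem_biUnion.2 ⟨e, he, Finset.mem_erase.2 ⟨Ne.symm hpv, hve⟩⟩
    have hcnt := edge_count hk hn hunif hconn hacyc
  · -- pairwise disjoint
    intro e₁ h₁ e₂ h₂ hne12
    rw [Function.onFun, Finset.disjoint_left]
    intro v hv1 hv2
    -- counting contradiction
    have h₁' : e₁ ∈ E := h₁
    have h₂' : e₂ ∈ E := h₂
    have hA1 : (e₁.erase (hpar E c e₁)).card = k - 1 := by
      rw [Finset.card_erase_of_mem (hpar_mem (hEne e₁ h₁')), hunif e₁ h₁']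
    have hsubU : Finset.univ.erase c ⊆
        (e₁.erase (hpar E c e₁)).erase v ∪ (E.erase e₁).biUnion (fun e => e.erase (hpar E c e)) := by
      intro i hi
      rw [← hUeq] at hi
      obtain ⟨e, he, hie⟩ := Finset.mem_biUnion.1 hi
      rcases eq_or_ne e e₁ with rfl | hee1
      · rcases eq_or_ne i v with rfl | hiv
        · exact Finset.mem_union_right _
            (Finset.mem_biUnion.2 ⟨e₂, Finset.mem_erase.2 ⟨Ne.symm hne12, h₂'⟩, hv2⟩)
        · exact Finset.mem_union_left _ (Finset.mem_erase.2 ⟨hiv, hie⟩)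
      · exact Finset.mem_union_right _
          (Finset.mem_biUnion.2 ⟨e, Finset.mem_erase.2 ⟨hee1, he⟩, hie⟩)
    have hcard1 : (Finset.univ.erase c).card = n - 1 := by
      rw [Finset.card_erase_of_mem (Finset.mem_univ c), Finset.card_univ, Fintype.card_fin]
    have hcard2 : ((e₁.erase (hpar E c e₁)).erase v).card = k - 2 := by
      rw [Finset.card_erase_of_mem hv1, hA1]
      omega
    have hcard3 : ((E.erase e₁).biUnion (fun e => e.erase (hpar E c e))).card
        ≤ (E.card - 1) * (k - 1) := by
      apply le_trans (Finset.card_biUnion_le)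
      have : ∀ e ∈ E.erase e₁, (e.erase (hpar E c e)).card = k - 1 := by
        intro e he
        have heE : e ∈ E := Finset.mem_of_mem_erase he
        rw [Finset.card_erase_of_mem (hpar_mem (hEne e heE)), hunif e heE]
      rw [Finset.sum_congr rfl this, Finset.sum_const, Finset.card_erase_of_mem h₁',
        smul_eq_mul]
    have hle := le_trans (Finset.card_le_card hsubU) (Finset.card_union_le _ _)
    rw [hcard1, hcard2] at hle
    -- arithmetic contradiction
    have hm1 : 1 ≤ E.card := Finset.card_pos.2 ⟨e₁, h₁'⟩
    obtain ⟨M, hM⟩ : ∃ M, E.card = M + 1 := ⟨E.card - 1, by omega⟩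
    obtain ⟨K, hK⟩ : ∃ K, k = K + 2 := ⟨k - 2, by omega⟩
    have hprod1 : E.card * k = M * K + 2 * M + K + 2 := by rw [hM, hK]; ring
    have hprod2 : (E.card - 1) * (k - 1) = M * K + M := by
      have hq1 : k - 1 = K + 1 := by omega
      have hq2 : E.card - 1 = M := by omega
      rw [hq1, hq2]
      ring
    rw [hprod2] at hcard3
    omega
  · exact hUeq


open Finset

private lemma gm_le {ι : Type*} (s : Finset ι) {k : ℕ} (hk : k ≠ 0) (hcard : s.card = k)
    (z : ι → ℝ) (hz : ∀ i ∈ s, 0 ≤ z i) {b : ℝ} (hb : 0 ≤ b) (hbk : b ^ k = ∏ i ∈ s, z i) :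
    (k : ℝ) * b ≤ ∑ i ∈ s, z i := by
  have hk0 : (0:ℝ) < (k:ℝ) := by exact_mod_cast Nat.pos_of_ne_zero hk
  have h1 : ∑ _i ∈ s, ((k:ℝ))⁻¹ = 1 := by
    rw [Finset.sum_const, hcard, nsmul_eq_mul]
    field_simp
  have h := Real.geom_mean_le_arith_mean_weighted s (fun _ => ((k:ℝ))⁻¹) z
    (fun i _ => by positivity) h1 hz
  have h2 : ∏ i ∈ s, z i ^ ((k:ℝ))⁻¹ = b := by
    rw [Real.finset_prod_rpow s z hz, ← hbk]
    exact Real.pow_rpow_inv_natCast hb hk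
  rw [h2] at h
  have h3 : ∑ i ∈ s, ((k:ℝ))⁻¹ * z i = ((k:ℝ))⁻¹ * ∑ i ∈ s, z i := by rw [Finset.mul_sum]
  rw [h3] at h
  calc (k:ℝ) * b ≤ (k:ℝ) * (((k:ℝ))⁻¹ * ∑ i ∈ s, z i) :=
        mul_le_mul_of_nonneg_left h (le_of_lt hk0)
    _ = ∑ i ∈ s, z i := by rw [← mul_assoc, mul_inv_cancel₀ (ne_of_gt hk0), one_mul]

section Key

variable {n k : ℕ} {E : Finset (Finset (Fin n))} {par : Finset (Fin n) → Fin n} {c : Fin n}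
  {x : Fin n → ℝ}

private lemma key_ineq (hk : 2 ≤ k) (hE : E.Nonempty)
    (hunif : ∀ e ∈ E, e.card = k)
    (hpar : ∀ e ∈ E, par e ∈ e)
    (hdisj : (E : Set (Finset (Fin n))).PairwiseDisjoint (fun e => e.erase (par e)))
    (hcov : E.biUnion (fun e => e.erase (par e)) = Finset.univ.erase c)
    (hx0 : ∀ i, 0 ≤ x i) (hx1 : ∑ i, x i ^ k = 1)
    (hcmax : ∀ i, x i ^ k ≤ x c ^ k) :
    (∑ e ∈ E, (k : ℝ) * ∏ i ∈ e, x i) ≤ (E.card : ℝ) ^ ((k : ℝ)⁻¹) ∧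
      ((∑ e ∈ E, (k : ℝ) * ∏ i ∈ e, x i) = (E.card : ℝ) ^ ((k : ℝ)⁻¹) →
        2 ≤ E.card → ∀ e ∈ E, par e = c) := by
  classical
  have hk0 : k ≠ 0 := by omega
  set mR : ℝ := (E.card : ℝ) with hmR
  have hm1 : 1 ≤ E.card := Finset.card_pos.2 hE
  have hmR1 : (1:ℝ) ≤ mR := by rw [hmR]; exact_mod_cast hm1
  have hmR0 : (0:ℝ) < mR := lt_of_lt_of_le zero_lt_one hmR1
  set μ : ℝ := mR ^ ((k : ℝ)⁻¹) with hμdef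
  have hμ0 : 0 < μ := Real.rpow_pos_of_pos hmR0 _
  have hμk : μ ^ k = mR := Real.rpow_inv_natCast_pow (le_of_lt hmR0) hk0
  -- per-edge bound
  set L : Finset (Fin n) → ℝ := fun e => (k : ℝ) * (μ ^ (k-1) * ∏ i ∈ e, x i) with hL
  set R : Finset (Fin n) → ℝ := fun e =>
    x (par e) ^ k + μ ^ k * ∑ i ∈ e.erase (par e), x i ^ k with hR
  have hb0 : ∀ e : Finset (Fin n), 0 ≤ μ ^ (k-1) * ∏ i ∈ e, x i := by
    intro e
    apply mul_nonneg (le_of_lt (pow_pos hμ0 _))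
    exact Finset.prod_nonneg (fun i _ => hx0 i)
  have hbk : ∀ e ∈ E, (μ ^ (k-1) * ∏ i ∈ e, x i) ^ k
      = (μ ^ k) ^ (k - 1) * ∏ i ∈ e, x i ^ k := by
    intro e he
    rw [mul_pow, ← Finset.prod_pow, ← pow_mul, ← pow_mul, Nat.mul_comm (k-1) k]
  have step1 : ∀ e ∈ E, L e ≤ R e := by
    intro e he
    have hpe := hpar e he
    have hcard : (e.erase (par e)).card = k - 1 := by
      rw [Finset.card_erase_of_mem hpe, hunif e he]
    set z : Fin n → ℝ := fun i => if i = par e then x i ^ k else μ ^ k * x i ^ k with hz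
    have hznn : ∀ i ∈ e, 0 ≤ z i := by
      intro i _
      by_cases h : i = par e
      · simp only [hz, h, if_pos rfl]
        exact pow_nonneg (hx0 _) k
      · simp only [hz, if_neg h]
        exact mul_nonneg (le_of_lt (pow_pos hμ0 _)) (pow_nonneg (hx0 i) k)
    have hprod : (μ ^ (k-1) * ∏ i ∈ e, x i) ^ k = ∏ i ∈ e, z i := by
      rw [hbk e he]
      rw [← Finset.mul_prod_erase e z hpe, ← Finset.mul_prod_erase e (fun i => x i ^ k) hpe]
      have h1 : z (par e) = x (par e) ^ k := by simp [hz]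
      have h2 : ∏ i ∈ e.erase (par e), z i = (μ^k)^(k-1) * ∏ i ∈ e.erase (par e), x i ^ k := by
        have : ∏ i ∈ e.erase (par e), z i = ∏ i ∈ e.erase (par e), (μ^k * x i ^ k) := by
          apply Finset.prod_congr rfl
          intro i hi
          have : i ≠ par e := Finset.ne_of_mem_erase hi
          simp [hz, this]
        rw [this, Finset.prod_mul_distrib, Finset.prod_const, hcard]
      rw [h1, h2]; ring
    have hgm := gm_le e hk0 (hunif e he) z hznn (hb0 e) hprod
    have hsz : ∑ i ∈ e, z i = x (par e) ^ k + μ ^ k * ∑ i ∈ e.erase (par e), x i ^ k := by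
      rw [← Finset.add_sum_erase e z hpe]
      congr 1
      · simp [hz]
      · rw [Finset.mul_sum]
        apply Finset.sum_congr rfl
        intro i hi
        have : i ≠ par e := Finset.ne_of_mem_erase hi
        simp [hz, this]
    rw [hsz] at hgm
    exact hgm
  have hsumA : ∑ e ∈ E, ∑ i ∈ e.erase (par e), x i ^ k = 1 - x c ^ k := by
    rw [← Finset.sum_biUnion hdisj, hcov,
      Finset.sum_erase_eq_sub (Finset.mem_univ c), hx1]
  have hsumR : ∑ e ∈ E, R e = (∑ e ∈ E, x (par e) ^ k) + μ ^ k * (1 - x c ^ k) := by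
    rw [hR, Finset.sum_add_distrib, ← Finset.mul_sum, hsumA]
  have step3 : ∑ e ∈ E, x (par e) ^ k ≤ mR * x c ^ k := by
    calc ∑ e ∈ E, x (par e) ^ k ≤ ∑ _e ∈ E, x c ^ k :=
          Finset.sum_le_sum (fun e _ => hcmax (par e))
      _ = mR * x c ^ k := by rw [Finset.sum_const, nsmul_eq_mul]
  have hμk1pos : 0 < μ ^ (k-1) := pow_pos hμ0 _
  have hLsum : ∑ e ∈ E, L e = μ ^ (k-1) * ∑ e ∈ E, (k : ℝ) * ∏ i ∈ e, x i := by
    rw [Finset.mul_sum]; apply Finset.sum_congr rfl; intro e _; rw [hL]; ring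
  have hRle : ∑ e ∈ E, R e ≤ μ ^ k := by
    rw [hsumR]
    have : mR * x c ^ k + μ ^ k * (1 - x c ^ k) = μ ^ k := by rw [← hμk]; ring
    linarith [step3]
  have hchain : ∑ e ∈ E, L e ≤ μ ^ k := le_trans (Finset.sum_le_sum step1) hRle
  have hμsplit : μ ^ k = μ ^ (k-1) * μ := by
    rw [← pow_succ]
    congr 1
    omega
  constructor
  · -- main inequality
    have : μ ^ (k-1) * ∑ e ∈ E, (k : ℝ) * ∏ i ∈ e, x i ≤ μ ^ (k-1) * μ := by
      rw [← hLsum, ← hμsplit]; exact hchain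
    exact le_of_mul_le_mul_left this hμk1pos
  · intro heq hm2
    -- total equality
    have hLtot : ∑ e ∈ E, L e = μ ^ k := by
      rw [hLsum, heq, ← hμsplit]
    have hRtot : ∑ e ∈ E, R e = μ ^ k :=
      le_antisymm hRle (by rw [← hLtot]; exact Finset.sum_le_sum step1)
    have hLR : ∀ e ∈ E, L e = R e :=
      (Finset.sum_eq_sum_iff_of_le step1).1 (by rw [hLtot, hRtot])
    have hparmax : ∀ e ∈ E, x (par e) ^ k = x c ^ k := by
      have h1 : ∑ e ∈ E, x (par e) ^ k = mR * x c ^ k := by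
        have := hRtot
        rw [hsumR] at this
        have h2 : mR * x c ^ k + μ ^ k * (1 - x c ^ k) = μ ^ k := by rw [← hμk]; ring
        linarith
      have h3 : ∑ e ∈ E, x (par e) ^ k = ∑ _e ∈ E, x c ^ k := by
        rw [h1, Finset.sum_const, nsmul_eq_mul]
      exact (Finset.sum_eq_sum_iff_of_le (fun e _ => hcmax (par e))).1 h3
    -- y c > 0
    have hyc : 0 < x c ^ k := by
      rcases lt_or_ge 0 (x c ^ k) with h | h
      · exact h
      · exfalso
        have : ∀ i : Fin n, x i ^ k = 0 := by
          intro i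
          have h5 : 0 ≤ x i ^ k := pow_nonneg (hx0 i) k
          have := hcmax i
          linarith
        rw [Finset.sum_congr rfl (fun i _ => this i)] at hx1
        simp at hx1
    by_contra hbad
    push_neg at hbad
    obtain ⟨e₀, he₀, hpe₀⟩ := hbad
    set v : Fin n := par e₀ with hv
    have hvmem : v ∈ Finset.univ.erase c := Finset.mem_erase.2 ⟨hpe₀, Finset.mem_univ _⟩
    rw [← hcov, Finset.mem_biUnion] at hvmem
    obtain ⟨e', he', hve'⟩ := hvmem
    set p' : Fin n := par e' with hp'
    have hvne : v ≠ p' := Finset.ne_of_mem_erase hve'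
    have hvine' : v ∈ e' := Finset.mem_of_mem_erase hve'
    have hp'mem : p' ∈ e' := hpar e' he'
    have hyv : x v ^ k = x c ^ k := hparmax e₀ he₀
    have hyp' : x p' ^ k = x c ^ k := hparmax e' he'
    -- strict AM-GM via modified weights
    set s2 : Finset (Fin n) := (e'.erase p').erase v with hs2
    have hcards2 : s2.card = k - 2 := by
      rw [hs2, Finset.card_erase_of_mem hve', Finset.card_erase_of_mem hp'mem, hunif e' he']
      omega
    set z' : Fin n → ℝ := fun i => if i = p' ∨ i = v then Real.sqrt mR * x i ^ k
      else μ ^ k * x i ^ k with hz'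
    have hz'nn : ∀ i ∈ e', 0 ≤ z' i := by
      intro i _
      by_cases h : i = p' ∨ i = v <;> simp [hz', h]
      · exact mul_nonneg (Real.sqrt_nonneg _) (pow_nonneg (hx0 i) k)
      · exact mul_nonneg (le_of_lt (pow_pos hμ0 _)) (pow_nonneg (hx0 i) k)
    have hsplit : ∀ f : Fin n → ℝ, ∏ i ∈ e', f i = f p' * (f v * ∏ i ∈ s2, f i) := by
      intro f
      rw [← Finset.mul_prod_erase e' f hp'mem, ← Finset.mul_prod_erase _ f hve']
    have hsplitS : ∀ f : Fin n → ℝ, ∑ i ∈ e', f i = f p' + (f v + ∑ i ∈ s2, f i) := by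
      intro f
      rw [← Finset.add_sum_erase e' f hp'mem, ← Finset.add_sum_erase _ f hve']
    have hprod' : (μ ^ (k-1) * ∏ i ∈ e', x i) ^ k = ∏ i ∈ e', z' i := by
      rw [hbk e' he', hsplit z', hsplit (fun i => x i ^ k)]
      have h1 : z' p' = Real.sqrt mR * x p' ^ k := by simp [hz']
      have h2 : z' v = Real.sqrt mR * x v ^ k := by simp [hz']
      have h3 : ∏ i ∈ s2, z' i = (μ^k)^(k-2) * ∏ i ∈ s2, x i ^ k := by
        have h4 : ∏ i ∈ s2, z' i = ∏ i ∈ s2, (μ^k * x i ^ k) := by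
          apply Finset.prod_congr rfl
          intro i hi
          have hiv : i ≠ v := Finset.ne_of_mem_erase hi
          have hip : i ≠ p' := Finset.ne_of_mem_erase (Finset.mem_of_mem_erase hi)
          simp [hz', hiv, hip]
        rw [h4, Finset.prod_mul_distrib, Finset.prod_const, hcards2]
      have hsq : Real.sqrt mR * Real.sqrt mR = μ ^ k := by
        rw [hμk]; exact Real.mul_self_sqrt (le_of_lt hmR0)
      have hpowsplit : (μ^k)^(k-1) = μ^k * (μ^k)^(k-2) := by
        rw [← pow_succ']
        congr 1
        omega
      rw [h1, h2, h3, hpowsplit, ← hsq]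
      ring
    have hgm' := gm_le e' hk0 (hunif e' he') z' hz'nn (hb0 e') hprod'
    have hsz' : ∑ i ∈ e', z' i
        = Real.sqrt mR * (x p' ^ k + x v ^ k) + μ ^ k * ∑ i ∈ s2, x i ^ k := by
      rw [hsplitS z']
      have h1 : z' p' = Real.sqrt mR * x p' ^ k := by simp [hz']
      have h2 : z' v = Real.sqrt mR * x v ^ k := by simp [hz']
      have h3 : ∑ i ∈ s2, z' i = μ^k * ∑ i ∈ s2, x i ^ k := by
        rw [Finset.mul_sum]
        apply Finset.sum_congr rfl
        intro i hi
        have hiv : i ≠ v := Finset.ne_of_mem_erase hi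
        have hip : i ≠ p' := Finset.ne_of_mem_erase (Finset.mem_of_mem_erase hi)
        simp [hz', hiv, hip]
      rw [h1, h2, h3]; ring
    -- the equality L e' = R e'
    have heqe' : (k:ℝ) * (μ ^ (k-1) * ∏ i ∈ e', x i)
        = x p' ^ k + μ ^ k * ∑ i ∈ e'.erase p', x i ^ k := hLR e' he'
    have hAsum : ∑ i ∈ e'.erase p', x i ^ k = x v ^ k + ∑ i ∈ s2, x i ^ k := by
      rw [← Finset.add_sum_erase _ _ hve']
    rw [hsz'] at hgm'
    rw [hAsum, hyv, hyp'] at heqe'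
    rw [hyv, hyp'] at hgm'
    -- heqe' : k * b = y_c + μ^k * (y_c + Σr); hgm' : k * b ≤ √m * (y_c + y_c) + μ^k * Σr
    have hfin : x c ^ k * (1 + mR) ≤ x c ^ k * (2 * Real.sqrt mR) := by
      have h6 := hgm'
      rw [heqe'] at h6
      rw [hμk] at h6
      nlinarith [h6]
    have h2m : (1:ℝ) + mR ≤ 2 * Real.sqrt mR :=
      le_of_mul_le_mul_left (by linarith [hfin]) hyc
    have hmR2 : (2:ℝ) ≤ mR := by rw [hmR]; exact_mod_cast hm2
    have hss : Real.sqrt mR ^ 2 = mR := Real.sq_sqrt (le_of_lt hmR0)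
    have h7 : (Real.sqrt mR - 1)^2 ≤ 0 := by
      have hexp : (Real.sqrt mR - 1)^2 = Real.sqrt mR^2 - 2*Real.sqrt mR + 1 := by ring
      rw [hexp, hss]
      linarith
    have h8 : (Real.sqrt mR - 1)^2 = 0 := le_antisymm h7 (sq_nonneg _)
    have h9 : Real.sqrt mR = 1 := by
      have h10 := (pow_eq_zero_iff (by norm_num : (2:ℕ) ≠ 0)).1 h8
      linarith [sub_eq_zero.1 h10]
    rw [h9] at hss
    norm_num at hss
    linarith

end Key

private lemma E_nonempty {E : Finset (Finset (Fin n))} (hn : 2 ≤ n) (hconn : HConnected E) :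
    E.Nonempty := by
  have : Nontrivial (Fin n) := Fin.nontrivial_iff_two_le.2 hn
  obtain ⟨a, b, hab⟩ := exists_pair_ne (Fin n)
  obtain ⟨q, vs, fs, ⟨-, -, hfE, -⟩, h0, hlast⟩ := hconn a b hab
  cases q with
  | zero => exact absurd (by rw [← h0, ← hlast]; rfl) hab
  | succ q => exact ⟨fs 0, hfE 0⟩

private lemma F_le {E : Finset (Finset (Fin n))} (hk : 2 ≤ k) (hn : 2 ≤ n)
    (hunif : ∀ e ∈ E, e.card = k) (hconn : HConnected E) (hacyc : ¬ HasBergeCycle E)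
    (x : Fin n → ℝ) (hx0 : ∀ i, 0 ≤ x i) (hx1 : ∑ i, x i ^ k = 1) :
    (∑ e ∈ E, (k : ℝ) * ∏ i ∈ e, x i) ≤ (E.card : ℝ) ^ ((k : ℝ)⁻¹) := by
  classical
  obtain ⟨c, -, hc⟩ := Finset.exists_max_image Finset.univ (fun i => x i ^ k)
    ⟨⟨0, by omega⟩, Finset.mem_univ _⟩
  obtain ⟨par, hp1, hp2, hp3⟩ := exists_parent hk hn hunif hconn hacyc c
  exact (key_ineq hk (E_nonempty hn hconn) hunif hp1 hp2 hp3 hx0 hx1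
    (fun i => hc i (Finset.mem_univ i))).1

private lemma rhoA_le_bound {E : Finset (Finset (Fin n))} (hk : 2 ≤ k) (hn : 2 ≤ n)
    (hunif : ∀ e ∈ E, e.card = k) (hconn : HConnected E) (hacyc : ¬ HasBergeCycle E) :
    rhoA k E ≤ (E.card : ℝ) ^ ((k : ℝ)⁻¹) := by
  apply Real.sSup_le
  · rintro y ⟨x, hx0, hx1, rfl⟩
    exact F_le hk hn hunif hconn hacyc x hx0 hx1
  · positivity

private lemma exists_maximizer {E : Finset (Finset (Fin n))} (hk : 2 ≤ k) (hn : 2 ≤ n) :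
    ∃ x : Fin n → ℝ, (∀ i, 0 ≤ x i) ∧ (∑ i, x i ^ k) = 1 ∧
      rhoA k E = ∑ e ∈ E, (k : ℝ) * ∏ i ∈ e, x i := by
  classical
  have hk0 : k ≠ 0 := by omega
  set K : Set (Fin n → ℝ) := {x | (∀ i, 0 ≤ x i) ∧ (∑ i, x i ^ k) = 1} with hK
  have hKne : K.Nonempty := by
    refine ⟨fun i => if i = ⟨0, by omega⟩ then 1 else 0, fun i => ?_, ?_⟩
    · dsimp only; split <;> norm_num
    · have h1 : ∀ i : Fin n, ((if i = (⟨0, by omega⟩ : Fin n) then (1:ℝ) else 0)) ^ k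
          = if i = (⟨0, by omega⟩ : Fin n) then (1:ℝ) else 0 := by
        intro i; split <;> simp [zero_pow hk0]
      simp only [h1]
      rw [Finset.sum_ite_eq' Finset.univ]
      simp
  have hKcl : IsClosed K := by
    have h1 : K = (⋂ i, {x : Fin n → ℝ | 0 ≤ x i}) ∩ {x : Fin n → ℝ | (∑ i, x i ^ k) = 1} := by
      ext x; simp [hK, Set.mem_iInter, forall_and]
    rw [h1]
    apply IsClosed.inter
    · exact isClosed_iInter fun i => isClosed_le continuous_const (continuous_apply i)
    · exact isClosed_eq (continuous_finset_sum _ fun i _ => (continuous_apply i).pow k)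
        continuous_const
  have hKbd : Bornology.IsBounded K := by
    apply Bornology.IsBounded.subset (Metric.isBounded_closedBall (x := (0 : Fin n → ℝ)) (r := 1))
    intro x hx
    rw [Metric.mem_closedBall]
    rw [dist_pi_le_iff zero_le_one]
    intro i
    have h2 : x i ^ k ≤ 1 := by
      rw [← hx.2]
      exact Finset.single_le_sum (fun j _ => pow_nonneg (hx.1 j) k) (Finset.mem_univ i)
    have h3 : x i ≤ 1 := (pow_le_one_iff_of_nonneg (hx.1 i) hk0).1 h2
    have h4 : (0 : Fin n → ℝ) i = 0 := rfl
    rw [h4, Real.dist_eq, sub_zero, abs_of_nonneg (hx.1 i)]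
    exact h3
  have hKc : IsCompact K := Metric.isCompact_of_isClosed_isBounded hKcl hKbd
  have hFc : Continuous (fun x : Fin n → ℝ => ∑ e ∈ E, (k : ℝ) * ∏ i ∈ e, x i) := by
    apply continuous_finset_sum
    intro e _
    exact continuous_const.mul (continuous_finset_prod _ fun i _ => continuous_apply i)
  obtain ⟨x₀, hx₀K, hmax⟩ := hKc.exists_isMaxOn hKne hFc.continuousOn
  have hgreat : IsGreatest {y | ∃ x : Fin n → ℝ, (∀ i, 0 ≤ x i) ∧ (∑ i, x i ^ k) = 1 ∧
      y = ∑ e ∈ E, (k : ℝ) * ∏ i ∈ e, x i} (∑ e ∈ E, (k : ℝ) * ∏ i ∈ e, x₀ i) := by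
    constructor
    · exact ⟨x₀, hx₀K.1, hx₀K.2, rfl⟩
    · rintro y ⟨x, h0, h1, rfl⟩
      exact hmax (⟨h0, h1⟩ : x ∈ K)
  exact ⟨x₀, hx₀K.1, hx₀K.2, hgreat.csSup_eq⟩

private lemma star_sum_card {E : Finset (Finset (Fin n))} (hk : 2 ≤ k) (hn : 2 ≤ n)
    {m₀ : ℕ} {u : Fin n} {V : Fin m₀ → Finset (Fin n)}
    (hVc : ∀ i, (V i).card = k - 1) (huV : ∀ i, u ∉ V i)
    (hVd : ∀ i j, i ≠ j → Disjoint (V i) (V j))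
    (hEeq : E = Finset.image (fun i => insert u (V i)) Finset.univ)
    (hcov : insert u (Finset.univ.biUnion V) = Finset.univ) :
    E.card = m₀ ∧ n = 1 + m₀ * (k - 1) := by
  classical
  have hVne : ∀ i, (V i).Nonempty := by
    intro i
    rw [← Finset.card_pos, hVc i]
    omega
  have hinj : ∀ i j : Fin m₀, insert u (V i) = insert u (V j) → i = j := by
    intro i j hij
    by_contra hne
    have hVij : V i = V j := by
      ext a
      constructor
      · intro ha
        have hau : a ≠ u := fun h => huV i (h ▸ ha)
        have : a ∈ insert u (V j) := hij ▸ Finset.mem_insert_of_mem ha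
        exact (Finset.mem_insert.1 this).resolve_left hau
      · intro ha
        have hau : a ≠ u := fun h => huV j (h ▸ ha)
        have : a ∈ insert u (V i) := hij ▸ Finset.mem_insert_of_mem ha
        exact (Finset.mem_insert.1 this).resolve_left hau
    obtain ⟨a, ha⟩ := hVne i
    exact (Finset.disjoint_left.1 (hVd i j hne)) ha (hVij ▸ ha)
  constructor
  · rw [hEeq, Finset.card_image_of_injOn (fun i _ j _ h => hinj i j h), Finset.card_univ,
      Fintype.card_fin]
  · have hu : u ∉ Finset.univ.biUnion V := by
      rw [Finset.mem_biUnion]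
      rintro ⟨i, -, hui⟩
      exact huV i hui
    have h2 := congrArg Finset.card hcov
    rw [Finset.card_insert_of_notMem hu, Finset.card_univ, Fintype.card_fin] at h2
    have h3 : (Finset.univ.biUnion V).card = m₀ * (k - 1) := by
      rw [Finset.card_biUnion (fun i _ j _ hij => hVd i j hij),
        Finset.sum_congr rfl (fun i _ => hVc i), Finset.sum_const, Finset.card_univ,
        Fintype.card_fin, smul_eq_mul]
    omega

private lemma rho_ge_of_star {E : Finset (Finset (Fin n))} (hk : 2 ≤ k) (hn : 2 ≤ n)
    (hunif : ∀ e ∈ E, e.card = k) (hconn : HConnected E) (hacyc : ¬ HasBergeCycle E)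
    (hstar : IsHyperstar k E) :
    (E.card : ℝ) ^ ((k : ℝ)⁻¹) ≤ rhoA k E := by
  classical
  have hk0 : k ≠ 0 := by omega
  obtain ⟨m₀, u, V, hVc, huV, hVd, hEeq, hcov⟩ := hstar
  obtain ⟨hcard, hn1⟩ := star_sum_card hk hn hVc huV hVd hEeq hcov
  have hm₀ : 1 ≤ m₀ := by
    by_contra h
    have h0 : m₀ = 0 := by omega
    rw [h0] at hn1
    simp at hn1
    omega
  set a : ℝ := (k : ℝ) with ha
  set b : ℝ := (m₀ : ℝ) with hb
  have ha0 : 0 < a := by rw [ha]; exact_mod_cast (by omega : 0 < k)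
  have hb0 : 0 < b := by rw [hb]; exact_mod_cast (by omega : 0 < m₀)
  set x : Fin n → ℝ := fun i =>
    if i = u then (a⁻¹) ^ ((k : ℝ)⁻¹) else ((a * b)⁻¹) ^ ((k : ℝ)⁻¹) with hx
  have hx0 : ∀ i, 0 ≤ x i := by
    intro i
    rw [hx]
    dsimp only
    split
    · exact Real.rpow_nonneg (by positivity) _
    · exact Real.rpow_nonneg (by positivity) _
  have hxu : x u ^ k = a⁻¹ := by
    rw [hx]
    simp only [if_pos rfl]
    exact Real.rpow_inv_natCast_pow (by positivity) hk0
  have hxv : ∀ i, i ≠ u → x i ^ k = (a * b)⁻¹ := by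
    intro i hi
    rw [hx]
    simp only [if_neg hi]
    exact Real.rpow_inv_natCast_pow (by positivity) hk0
  have hcastk : ((k - 1 : ℕ) : ℝ) = a - 1 := by
    rw [ha, Nat.cast_sub (by omega : 1 ≤ k), Nat.cast_one]
  have hx1 : ∑ i, x i ^ k = 1 := by
    rw [← Finset.add_sum_erase Finset.univ (fun i => x i ^ k) (Finset.mem_univ u), hxu]
    have h1 : ∑ i ∈ Finset.univ.erase u, x i ^ k
        = ∑ _i ∈ Finset.univ.erase u, (a * b)⁻¹ := by
      apply Finset.sum_congr rfl
      intro i hi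
      exact hxv i (Finset.mem_erase.1 hi).1
    rw [h1, Finset.sum_const, Finset.card_erase_of_mem (Finset.mem_univ u),
      Finset.card_univ, Fintype.card_fin, nsmul_eq_mul]
    have h2 : ((n - 1 : ℕ) : ℝ) = b * (a - 1) := by
      have h3 : n - 1 = m₀ * (k - 1) := by omega
      rw [h3, Nat.cast_mul, hcastk, hb]
    rw [h2]
    field_simp
    ring
  -- the value of F at x
  have hinj : ∀ i j : Fin m₀, insert u (V i) = insert u (V j) → i = j := by
    intro i j hij
    by_contra hne
    have hVne : (V i).Nonempty := by
      rw [← Finset.card_pos, hVc i]; omega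
    obtain ⟨w, hw⟩ := hVne
    have hwu : w ≠ u := fun h => huV i (h ▸ hw)
    have : w ∈ insert u (V j) := hij ▸ Finset.mem_insert_of_mem hw
    have hwj : w ∈ V j := (Finset.mem_insert.1 this).resolve_left hwu
    exact (Finset.disjoint_left.1 (hVd i j hne)) hw hwj
  set c₀ : ℝ := ((a * b)⁻¹) ^ ((k : ℝ)⁻¹) with hc₀
  have hc₀0 : 0 ≤ c₀ := Real.rpow_nonneg (by positivity) _
  have hc₀k : c₀ ^ k = (a * b)⁻¹ := Real.rpow_inv_natCast_pow (by positivity) hk0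
  have hprodVi : ∀ i : Fin m₀, ∏ j ∈ insert u (V i), x j = x u * c₀ ^ (k - 1) := by
    intro i
    rw [Finset.prod_insert (huV i)]
    congr 1
    have h4 : ∀ j ∈ V i, x j = c₀ := by
      intro j hj
      have : j ≠ u := fun h => huV i (h ▸ hj)
      rw [hx]; simp only [if_neg this, hc₀]
    rw [Finset.prod_congr rfl h4, Finset.prod_const, hVc i]
  have hFval : ∑ e ∈ E, (k : ℝ) * ∏ i ∈ e, x i = b * (a * (x u * c₀ ^ (k - 1))) := by
    rw [hEeq, Finset.sum_image (fun i _ j _ h => hinj i j h)]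
    have h5 : ∀ i : Fin m₀, (k : ℝ) * ∏ j ∈ insert u (V i), x j
        = a * (x u * c₀ ^ (k-1)) := by
      intro i
      rw [hprodVi i, ha]
    rw [Finset.sum_congr rfl (fun i _ => h5 i), Finset.sum_const, Finset.card_univ,
      Fintype.card_fin, nsmul_eq_mul, hb]
  -- value to the k-th power equals b
  have hxu0 : 0 ≤ x u := hx0 u
  have hval0 : 0 ≤ b * (a * (x u * c₀ ^ (k - 1))) := by positivity
  obtain ⟨K, hK⟩ : ∃ K, k = K + 2 := ⟨k - 2, by omega⟩
  have hvpow : (b * (a * (x u * c₀ ^ (k - 1)))) ^ k = b := by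
    have hk1 : k - 1 = K + 1 := by omega
    have h6 : (b * (a * (x u * c₀ ^ (k - 1)))) ^ k
        = b ^ k * a ^ k * (x u ^ k) * (c₀ ^ k) ^ (k - 1) := by
      rw [mul_pow, mul_pow, mul_pow, ← pow_mul, ← pow_mul, Nat.mul_comm (k-1) k, pow_mul]
      ring
    rw [h6, hxu, hc₀k, hk1, hK]
    have hab0 : a * b ≠ 0 := by positivity
    have ha1 : a ≠ 0 := ne_of_gt ha0
    have hb1 : b ≠ 0 := ne_of_gt hb0
    rw [mul_inv, mul_pow, inv_pow, inv_pow]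
    field_simp
    ring
  have hveq : b * (a * (x u * c₀ ^ (k - 1))) = b ^ ((k : ℝ)⁻¹) := by
    have h7 := Real.pow_rpow_inv_natCast hval0 hk0
    rw [hvpow] at h7
    exact h7.symm
  -- conclude
  have hbdd : BddAbove {y | ∃ x : Fin n → ℝ, (∀ i, 0 ≤ x i) ∧ (∑ i, x i ^ k) = 1 ∧
      y = ∑ e ∈ E, (k : ℝ) * ∏ i ∈ e, x i} := by
    refine ⟨(E.card : ℝ) ^ ((k : ℝ)⁻¹), ?_⟩
    rintro y ⟨x', hx'0, hx'1, rfl⟩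
    exact F_le hk hn hunif hconn hacyc x' hx'0 hx'1
  have hmem : b ^ ((k : ℝ)⁻¹) ∈ {y | ∃ x : Fin n → ℝ, (∀ i, 0 ≤ x i) ∧ (∑ i, x i ^ k) = 1 ∧
      y = ∑ e ∈ E, (k : ℝ) * ∏ i ∈ e, x i} :=
    ⟨x, hx0, hx1, by rw [hFval, hveq]⟩
  have hle := le_csSup hbdd hmem
  have hEb : (E.card : ℝ) = b := by rw [hb, hcard]
  rw [hEb]
  exact hle

private lemma star_of_eq {E : Finset (Finset (Fin n))} (hk : 2 ≤ k) (hn : 2 ≤ n)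
    (hunif : ∀ e ∈ E, e.card = k) (hconn : HConnected E) (hacyc : ¬ HasBergeCycle E)
    (heq : rhoA k E = (E.card : ℝ) ^ ((k : ℝ)⁻¹)) : IsHyperstar k E := by
  classical
  obtain ⟨x, hx0, hx1, hrx⟩ := exists_maximizer (E := E) hk hn
  obtain ⟨c, -, hc⟩ := Finset.exists_max_image Finset.univ (fun i => x i ^ k)
    ⟨⟨0, by omega⟩, Finset.mem_univ _⟩
  obtain ⟨par, hp1, hp2, hp3⟩ := exists_parent hk hn hunif hconn hacyc c
  have hFeq : (∑ e ∈ E, (k : ℝ) * ∏ i ∈ e, x i) = (E.card : ℝ) ^ ((k : ℝ)⁻¹) := by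
    rw [← hrx, heq]
  have hEne : E.Nonempty := E_nonempty hn hconn
  have hkey := (key_ineq hk hEne hunif hp1 hp2 hp3 hx0 hx1
    (fun i => hc i (Finset.mem_univ i))).2 hFeq
  have hparc : ∀ e ∈ E, par e = c := by
    rcases eq_or_lt_of_le (show 1 ≤ E.card from Finset.card_pos.2 hEne) with h1 | h2
    · -- E.card = 1
      obtain ⟨e₀, hE0⟩ := Finset.card_eq_one.1 h1.symm
      intro e he
      rw [hE0, Finset.mem_singleton] at he
      subst he
      by_contra hne
      have hmem : par e ∈ Finset.univ.erase c := Finset.mem_erase.2 ⟨hne, Finset.mem_univ _⟩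
      rw [← hp3, hE0, Finset.singleton_biUnion] at hmem
      exact Finset.notMem_erase _ _ hmem
    · exact hkey h2
  -- construct the hyperstar structure
  have hpc : ∀ e ∈ E, c ∈ e := by
    intro e he
    rw [← hparc e he]
    exact hp1 e he
  set eF : Fin E.card → Finset (Fin n) := fun i => ((E.equivFin.symm i : {e // e ∈ E}) : Finset (Fin n))
    with heFdef
  have heFE : ∀ i, eF i ∈ E := fun i => (E.equivFin.symm i).2
  have heFinj : Function.Injective eF := by
    intro i j hij
    have := Subtype.ext hij (p := fun e => e ∈ E)
    exact E.equivFin.symm.injective this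
  have heFsurj : ∀ e ∈ E, ∃ i, eF i = e := by
    intro e he
    exact ⟨E.equivFin ⟨e, he⟩, by rw [heFdef]; simp⟩
  refine ⟨E.card, c, fun i => (eF i).erase c, ?_, ?_, ?_, ?_, ?_⟩
  · intro i
    rw [Finset.card_erase_of_mem (hpc _ (heFE i)), hunif _ (heFE i)]
  · intro i
    exact Finset.notMem_erase _ _
  · intro i j hij
    have hne : eF i ≠ eF j := fun h => hij (heFinj h)
    have := hp2 (heFE i) (heFE j) hne
    rw [Function.onFun, hparc _ (heFE i), hparc _ (heFE j)] at this
    exact this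
  · ext e
    rw [Finset.mem_image]
    constructor
    · intro he
      obtain ⟨i, hi⟩ := heFsurj e he
      refine ⟨i, Finset.mem_univ _, ?_⟩
      show insert c ((eF i).erase c) = e
      rw [hi, Finset.insert_erase (hpc e he)]
    · rintro ⟨i, -, rfl⟩
      show insert c ((eF i).erase c) ∈ E
      rw [Finset.insert_erase (hpc _ (heFE i))]
      exact heFE i
  · have hU : Finset.univ.biUnion (fun i => (eF i).erase c) = Finset.univ.erase c := by
      rw [← hp3]
      ext v
      rw [Finset.mem_biUnion, Finset.mem_biUnion]
      constructor
      · rintro ⟨i, -, hv⟩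
        refine ⟨eF i, heFE i, ?_⟩
        rwa [hparc _ (heFE i)]
      · rintro ⟨e, he, hv⟩
        obtain ⟨i, rfl⟩ := heFsurj e he
        refine ⟨i, Finset.mem_univ _, ?_⟩
        rwa [hparc _ (heFE i)] at hv
    rw [hU, Finset.insert_erase (Finset.mem_univ c)]

end SuperTreeAux


/-- Every `k`-uniform supertree on `n` vertices with `m` edges satisfies
`ρ(A) ≤ m^{1/k}`, with equality iff it is the hyperstar `S_{n,k}`. -/
theorem rhoA_supertree_le {n k : ℕ} (hk : 2 ≤ k) (hn : 2 ≤ n)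
    (E : Finset (Finset (Fin n))) (hunif : ∀ e ∈ E, e.card = k)
    (hconn : HConnected E) (hacyc : ¬ HasBergeCycle E) :
    rhoA k E ≤ (E.card : ℝ) ^ ((k : ℝ)⁻¹) ∧
      (rhoA k E = (E.card : ℝ) ^ ((k : ℝ)⁻¹) ↔ IsHyperstar k E) := by
  constructor
  · exact SuperTreeAux.rhoA_le_bound hk hn hunif hconn hacyc
  · constructor
    · intro heq
      exact SuperTreeAux.star_of_eq hk hn hunif hconn hacyc heq
    · intro hstar
      exact le_antisymm (SuperTreeAux.rhoA_le_bound hk hn hunif hconn hacyc)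
        (SuperTreeAux.rho_ge_of_star hk hn hunif hconn hacyc hstar)
end
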